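/- arXiv:2105.14604 — 2 statements merged into one kernel-verified Lean document; each statement's English description precedes it below -/
import Mathlib

section
/- Let f : ℕ → ℕ be a monotone map with all values finite and unbounded image, with values a_i = f(i), and set a_0 = 1. Then: (a) the strongly stable ideal { Γg : g large, g ≺_lex f } is strongly stably generated by the monomials x_{a_1}⋯x_{a_{r−1}}·x_{a_r − 1} for all r ≥ 1 with a_{r−1} < a_r; (b) the strongly stable ideal { Λg : g small, g ≻_lex f } is strongly stably generated by the monomials x_1^{a_1 − a_0} x_2^{a_2 − a_1} ⋯ x_{r−1}^{a_{r−1} − a_{r−2}} x_r^{a_r − a_{r−1} + 1} for all r ≥ 1. -/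
/-!
Encoding conventions (used throughout):
* The paper's positive integers `ℕ = {1,2,…}` are encoded by Lean's `ℕ = {0,1,2,…}`
  via the order isomorphism `n ↦ n - 1`, in both the domain and the finite part of
  the codomain `ℕ̂ = ℕ ∪ {∞}`, the latter encoded as `ℕ∞`.  Under this shift the
  duality `D` is given by the same formula `Df(p) = min { q | f(q) > p }`.
* Variables `x_1, x_2, …` are indexed by Lean's `0, 1, 2, …`; monomials are
  finitely supported functions `ℕ → ℕ` (exponent vectors); exponents are unshifted.
-/

noncomputable section

/-- Maps `ℕ → ℕ̂`. -/
abbrev NNhat := ℕ → ℕ∞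

/-- SmallMap maps: all values bounded by some natural number. -/
def SmallMap (f : NNhat) : Prop := ∃ N : ℕ, ∀ n, f n ≤ (N : ℕ∞)

/-- LargeMap maps: some value equals `∞`. -/
def LargeMap (f : NNhat) : Prop := ∃ n, f n = ⊤

/-- Maps with all values finite and unbounded image. -/
def UnbFinMap (f : NNhat) : Prop := (∀ n, f n ≠ ⊤) ∧ ∀ N : ℕ, ∃ n, (N : ℕ∞) < f n

/-- The duality `D`: `Df(p) = min { q : f(q) > p }`, the min of the empty set being `∞`. -/
def Ddual (f : NNhat) : NNhat := fun p =>
  sInf ((fun q : ℕ => (q : ℕ∞)) '' {q : ℕ | (p : ℕ∞) < f q})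

/-- The poset `Hom(ℕ, ℕ̂)` of monotone maps, ordered pointwise. -/
abbrev HomNN := {f : NNhat // Monotone f}

/-- The topology on `Hom(ℕ, ℕ̂)` with basis the intervals `U(f̲, f̄)` with `f̲` small
and `f̄` large. -/
instance (priority := 10000) : TopologicalSpace HomNN :=
  TopologicalSpace.generateFrom
    {S | ∃ a b : HomNN, SmallMap a.1 ∧ LargeMap b.1 ∧ S = {f : HomNN | a ≤ f ∧ f ≤ b}}

/-- Monomials: finitely supported functions `ℕ → ℕ` (exponent vectors). -/
def Mon : Set (ℕ → ℕ) := {u | (Function.support u).Finite}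

/-- `Γ f = ∏_{f(i) < ∞} x_{f(i)}` : the exponent of `x_j` is `#{i | f(i) = j}`. -/
def Gmap (f : NNhat) : ℕ → ℕ := fun j => Nat.card {i : ℕ // f i = (j : ℕ∞)}

/-- `Λ f = ∏_{i ≥ 1} x_i^{f(i) - f(i-1)}` (with the convention `f(0) = 1`, i.e. the
shifted convention `f(-1) = 0`). -/
def Lmap (f : NNhat) : ℕ → ℕ := fun i =>
  match i with
  | 0 => (f 0).toNat
  | k + 1 => (f (k + 1)).toNat - (f k).toNat

/-- The exponent vector of the variable `x_i`. -/
def xvar (i : ℕ) : ℕ → ℕ := fun k => if k = i then 1 else 0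

/-- One generating step of the strongly stable order: `stStep a b` means `a ≥_st b`
by one of the defining relations `x_i·w ≥_st x_j·w` (`i ≤ j`) or `x_i·b ≥_st b`. -/
def stStep (a b : ℕ → ℕ) : Prop :=
  (∃ i j w, i ≤ j ∧ a = w + xvar i ∧ b = w + xvar j) ∨ (∃ i, a = b + xvar i)

/-- The strongly stable order: `stGE u v` means `u ≥_st v`. -/
def stGE (u v : ℕ → ℕ) : Prop := Relation.ReflTransGen stStep u v

/-- A strongly stable ideal: a set of monomials upward closed under `≥_st`. -/
def IsSStableIdeal (I : Set (ℕ → ℕ)) : Prop :=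
  I ⊆ Mon ∧ ∀ u ∈ I, ∀ v, stGE v u → v ∈ I

/-- The smallest strongly stable ideal containing the set `G` of monomials. -/
def sstSpan (G : Set (ℕ → ℕ)) : Set (ℕ → ℕ) := {v | ∃ u ∈ G, stGE v u}

/-- `Γ(ℐ^L)`: the set of monomials `Γ f` for `f` large in `ℐ`. -/
def GammaIdeal (ℐ : Set HomNN) : Set (ℕ → ℕ) :=
  {u | ∃ f ∈ ℐ, LargeMap f.1 ∧ u = Gmap f.1}

/-- `Λ(ℱ_S)`: the set of monomials `Λ f` for `f` small in `ℱ`. -/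
def LambdaIdeal (ℱ : Set HomNN) : Set (ℕ → ℕ) :=
  {u | ∃ f ∈ ℱ, SmallMap f.1 ∧ u = Lmap f.1}

/-- `I` is a dualizable strongly stable ideal with dual strongly stable ideal `J`:
the open poset ideal `ℐ` corresponding to `I` is regular open, and `J` is obtained
from the interior `ℱ` of the complement of `ℐ` as `Λ(ℱ_S)`. -/
def IsDualPair (I J : Set (ℕ → ℕ)) : Prop :=
  ∃ ℐ : Set HomNN, IsOpen ℐ ∧ IsLowerSet ℐ ∧ ℐ = interior (closure ℐ) ∧
    GammaIdeal ℐ = I ∧ LambdaIdeal (interior ℐᶜ) = J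

/-- Strict lexicographic order `f ≻_lex g`: at the least index where they differ,
`f` is larger. -/
def lexGT (f g : NNhat) : Prop := ∃ r, (∀ i < r, f i = g i) ∧ g r < f r

/-- `f ⪰_lex g`. -/
def lexGE (f g : NNhat) : Prop := f = g ∨ lexGT f g

/-- The single monomial `x_{i+1}^e` (Lean variable index `i`). -/
def singleMon (i e : ℕ) : ℕ → ℕ := fun j => if j = i then e else 0

end

noncomputable section

/-- The monomial `x_{a_1} ⋯ x_{a_{r-1}} · x_{a_r - 1}` as exponent vector, where
`a` is given in the paper's (positive, one-based) values and the variable `x_k`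
has Lean index `k - 1`. -/
def genA (a : ℕ → ℕ) (r : ℕ) : ℕ → ℕ := fun j =>
  Nat.card {i : ℕ // 1 ≤ i ∧ i < r ∧ a i - 1 = j} + (if a r - 2 = j then 1 else 0)

/-- The monomial `x_1^{a_1 - a_0} x_2^{a_2 - a_1} ⋯ x_{r-1}^{a_{r-1} - a_{r-2}}
x_r^{a_r - a_{r-1} + 1}` as exponent vector (variable `x_k` at Lean index `k - 1`). -/
def genB (a : ℕ → ℕ) (r : ℕ) : ℕ → ℕ := fun j =>
  if j + 1 < r then a (j + 1) - a j
  else if j + 1 = r then a r - a (r - 1) + 1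
  else 0




def psum (u : ℕ → ℕ) (k : ℕ) : ℕ := ∑ j ∈ Finset.range k, u j

lemma psum_zero (u : ℕ → ℕ) : psum u 0 = 0 := Finset.sum_range_zero u

lemma psum_succ (u : ℕ → ℕ) (k : ℕ) : psum u (k+1) = psum u k + u k :=
  Finset.sum_range_succ u k

lemma psum_add (x y : ℕ → ℕ) (k : ℕ) : psum (x + y) k = psum x k + psum y k := by
  simpa [psum] using Finset.sum_add_distrib

lemma psum_xvar (i k : ℕ) : psum (xvar i) k = if i < k then 1 else 0 := by
  classical
  simp only [psum, xvar]
  rw [Finset.sum_ite_eq' (Finset.range k) i (fun _ => 1)]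
  simp

lemma psum_mono (u : ℕ → ℕ) : Monotone (psum u) := by
  intro k m hkm
  exact Finset.sum_le_sum_of_subset (Finset.range_subset_range.2 hkm)

lemma psum_ext {u v : ℕ → ℕ} (h : ∀ k, psum u k = psum v k) : u = v := by
  funext j
  have h1 := h (j+1); have h2 := h j
  rw [psum_succ, psum_succ] at h1
  omega

lemma psum_stable {u : ℕ → ℕ} {m k : ℕ} (h : ∀ j, m ≤ j → u j = 0) (hmk : m ≤ k) :
    psum u k = psum u m := by
  induction k with
  | zero => have : m = 0 := by omega
            rw [this]
  | succ n ih =>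
    rcases Nat.lt_or_ge m (n+1) with hlt | hge
    · rw [psum_succ, ih (by omega), h n (by omega)]; omega
    · have : m = n + 1 := by omega
      rw [this]

lemma stStep_psum_le {a b : ℕ → ℕ} (h : stStep a b) (k : ℕ) : psum b k ≤ psum a k := by
  rcases h with ⟨i, j, w, hij, ha, hb⟩ | ⟨i, ha⟩
  · rw [ha, hb, psum_add, psum_add, psum_xvar, psum_xvar]
    have : (if j < k then 1 else 0) ≤ (if i < k then 1 else 0) := by
      split <;> split <;> omega
    omega
  · rw [ha, psum_add]; omega

lemma stStep_support {a b : ℕ → ℕ} (h : stStep a b) (hb : (Function.support b).Finite) :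
    (Function.support a).Finite := by
  rcases h with ⟨i, j, w, _, ha, hb'⟩ | ⟨i, ha⟩
  · have hw : (Function.support w).Finite := by
      apply hb.subset
      intro x hx
      simp only [Function.support, Set.mem_setOf_eq] at hx ⊢
      rw [hb']; simp only [Pi.add_apply]
      omega
    rw [ha]
    apply (hw.union (Set.finite_singleton i)).subset
    intro x hx
    simp only [Function.support, Set.mem_setOf_eq, Pi.add_apply, xvar] at hx
    by_cases hxi : x = i
    · exact Or.inr hxi
    · left; simp only [Function.mem_support]; simp [hxi] at hx; exact hx
  · rw [ha]
    apply (hb.union (Set.finite_singleton i)).subset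
    intro x hx
    simp only [Function.support, Set.mem_setOf_eq, Pi.add_apply, xvar] at hx
    by_cases hxi : x = i
    · exact Or.inr hxi
    · left; simp only [Function.mem_support]; simp [hxi] at hx; exact hx

lemma stGE_psum_le {u v : ℕ → ℕ} (h : stGE u v) (k : ℕ) : psum v k ≤ psum u k := by
  induction h with
  | refl => exact le_refl _
  | tail _ hstep ih => exact le_trans (stStep_psum_le hstep k) ih

lemma stGE_support {u v : ℕ → ℕ} (h : stGE u v) (hv : (Function.support v).Finite) :
    (Function.support u).Finite := by
  induction h with
  | refl => exact hv
  | tail _ hstep ih => exact ih (stStep_support hstep hv)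

/-- Phase 2 of the converse: equal degrees, induction on excess area. -/
lemma stGE_of_psum_eq_deg (B : ℕ) (v : ℕ → ℕ) (hvB : ∀ j, B ≤ j → v j = 0) :
    ∀ (M : ℕ) (u : ℕ → ℕ), (∀ j, B ≤ j → u j = 0) → (∀ k, psum v k ≤ psum u k) →
    psum u B = psum v B → (∑ k ∈ Finset.range B, (psum u k - psum v k)) = M →
    stGE u v := by
  intro M
  induction M using Nat.strong_induction_on with
  | _ M IH =>
  intro u huB hle hdeg hM
  classical
  by_cases hM0 : M = 0
  · have hall : ∀ k, psum u k = psum v k := by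
      intro k
      rcases Nat.lt_or_ge k B with hk | hk
      · have h0 : psum u k - psum v k = 0 := by
          subst hM0
          have hnn : ∀ x ∈ Finset.range B, 0 ≤ psum u x - psum v x := fun _ _ => Nat.zero_le _
          have := Finset.sum_eq_zero_iff_of_nonneg hnn |>.1 (by omega) k (Finset.mem_range.2 hk)
          omega
        have := hle k; omega
      · rw [psum_stable huB hk, psum_stable hvB hk, hdeg]
    rw [psum_ext hall]
    exact Relation.ReflTransGen.refl
  · have hex : ∃ k, psum v k < psum u k := by
      by_contra hc
      push_neg at hc
      apply hM0; subst hM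
      apply Finset.sum_eq_zero
      intro k _
      have := hle k; have := hc k; omega
    set k₀ := Nat.find hex with hk₀def
    have hk₀ : psum v k₀ < psum u k₀ := Nat.find_spec hex
    have hk₀min : ∀ k < k₀, psum u k = psum v k := by
      intro k hk
      have h1 := Nat.find_min hex hk
      have := hle k; omega
    have hk₀pos : 0 < k₀ := by
      rcases Nat.eq_zero_or_pos k₀ with h0 | h
      · rw [h0, psum_zero, psum_zero] at hk₀; omega
      · exact h
    set i := k₀ - 1 with hi
    have hik₀ : k₀ = i + 1 := by omega
    have hui : 1 ≤ u i := by
      have h1 : psum u (i+1) = psum u i + u i := psum_succ u i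
      have h2 : psum v (i+1) = psum v i + v i := psum_succ v i
      have h3 : psum u i = psum v i := hk₀min i (by omega)
      rw [hik₀] at hk₀; omega
    have hk₀B : k₀ < B := by
      by_contra hc
      push_neg at hc
      rw [psum_stable huB hc, psum_stable hvB hc, hdeg] at hk₀
      omega
    have hexB : ∃ k, i < k ∧ psum u k ≤ psum v k :=
      ⟨B, by omega, le_of_eq hdeg⟩
    set k₁ := Nat.find hexB with hk₁def
    have hk₁ : i < k₁ ∧ psum u k₁ ≤ psum v k₁ := Nat.find_spec hexB
    have hk₁min : ∀ k, i < k → k < k₁ → psum v k < psum u k := by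
      intro k hik hkk₁
      have h1 := Nat.find_min hexB hkk₁
      have := hle k
      omega
    have hk₁B : k₁ ≤ B := Nat.find_le ⟨by omega, le_of_eq hdeg⟩
    have hk₀k₁ : k₀ < k₁ := by
      rcases Nat.lt_or_ge k₀ k₁ with h | h
      · exact h
      · exfalso
        rcases Nat.eq_or_lt_of_le h with h' | h'
        · rw [h'] at hk₁; omega
        · have := hk₁.1; omega
    set j := k₁ - 1 with hj
    have hij : i < j := by omega
    have hjB : j < B := by omega
    -- the move
    set w : ℕ → ℕ := fun x => if x = i then u x - 1 else u x with hw
    set u' : ℕ → ℕ := fun x => if x = j then w x + 1 else w x with hu'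
    have huw : u = w + xvar i := by
      funext x
      simp only [hw, Pi.add_apply, xvar]
      by_cases hx : x = i <;> simp [hx] <;> omega
    have hu'w : u' = w + xvar j := by
      funext x
      simp only [hu', hw, Pi.add_apply, xvar]
      by_cases hx : x = j <;> simp [hx]
    have hstep : stStep u u' :=
      Or.inl ⟨i, j, w, le_of_lt hij, huw, hu'w⟩
    have hpu : ∀ k, psum u k = psum w k + (if i < k then 1 else 0) := by
      intro k; rw [huw, psum_add, psum_xvar]
    have hpu' : ∀ k, psum u' k = psum w k + (if j < k then 1 else 0) := by
      intro k; rw [hu'w, psum_add, psum_xvar]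
    have hle' : ∀ k, psum v k ≤ psum u' k := by
      intro k
      have h1 := hpu k; have h2 := hpu' k; have h3 := hle k
      rcases Nat.lt_or_ge i k with hik | hik
      · rcases Nat.lt_or_ge j k with hjk | hjk
        · simp only [if_pos hik] at h1; simp only [if_pos hjk] at h2; omega
        · have h4 : psum v k < psum u k := hk₁min k hik (by omega)
          simp only [if_pos hik] at h1
          simp only [if_neg (by omega : ¬ j < k)] at h2
          omega
      · simp only [if_neg (by omega : ¬ i < k), if_neg (by omega : ¬ j < k)] at h1 h2
        omega
    have huB' : ∀ x, B ≤ x → u' x = 0 := by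
      intro x hx
      have h0 : u x = 0 := huB x hx
      simp only [hu', hw]
      rw [if_neg (by omega), if_neg (by omega)]
      exact h0
    have hdeg' : psum u' B = psum v B := by
      have h1 := hpu B; have h2 := hpu' B
      rw [if_pos (by omega)] at h1
      rw [if_pos (by omega)] at h2
      omega
    have hlt : (∑ k ∈ Finset.range B, (psum u' k - psum v k)) < M := by
      subst hM
      apply Finset.sum_lt_sum
      · intro k _
        have h1 := hpu k; have h2 := hpu' k
        have : psum u' k ≤ psum u k := by
          rcases Nat.lt_or_ge j k with hjk | hjk
          · rw [if_pos hjk] at h2; rw [if_pos (by omega)] at h1; omega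
          · rw [if_neg (by omega)] at h2; split at h1 <;> omega
        omega
      · refine ⟨k₀, Finset.mem_range.2 hk₀B, ?_⟩
        have h1 := hpu k₀; have h2 := hpu' k₀
        rw [if_pos (by omega : i < k₀)] at h1
        rw [if_neg (by omega : ¬ j < k₀)] at h2
        omega
    exact Relation.ReflTransGen.head hstep
      (IH _ hlt u' huB' hle' hdeg' rfl)

/-- Phase 1: reduce the degree difference. -/
lemma stGE_of_psum_le_aux (v : ℕ → ℕ) (B : ℕ) (hvB : ∀ j, B ≤ j → v j = 0) :
    ∀ (n : ℕ) (u : ℕ → ℕ), (∀ j, B ≤ j → u j = 0) → (∀ k, psum v k ≤ psum u k) →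
    psum u B = psum v B + n → stGE u v := by
  intro n
  induction n with
  | zero =>
    intro u huB hle hdeg
    exact stGE_of_psum_eq_deg B v hvB _ u huB hle (by omega) rfl
  | succ n IHn =>
    intro u huB hle hdeg
    classical
    have hex : ∃ jj, jj ≤ B ∧ u jj ≠ 0 := by
      by_contra hc
      push_neg at hc
      have : psum u B = 0 := by
        apply Finset.sum_eq_zero
        intro k hk
        exact hc k (le_of_lt (Finset.mem_range.1 hk))
      omega
    obtain ⟨jj, hjjB, hjj⟩ := hex
    set i := Nat.findGreatest (fun j => u j ≠ 0) B with hidef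
    have hui : u i ≠ 0 := Nat.findGreatest_spec (P := fun j => u j ≠ 0) hjjB hjj
    have higr : ∀ m, i < m → u m = 0 := by
      intro m him
      rcases Nat.lt_or_ge m (B+1) with hm | hm
      · by_contra hcm
        exact Nat.findGreatest_is_greatest him (by omega) hcm
      · exact huB m (by omega)
    have hiB : i < B := by
      rcases Nat.lt_or_ge i B with h | h
      · exact h
      · exact absurd (huB i h) hui
    set u' : ℕ → ℕ := fun x => if x = i then u x - 1 else u x with hu'
    have huw : u = u' + xvar i := by
      funext x
      simp only [hu', Pi.add_apply, xvar]
      by_cases hx : x = i <;> simp [hx] <;> omega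
    have hstep : stStep u u' := Or.inr ⟨i, huw⟩
    have hpu : ∀ k, psum u k = psum u' k + (if i < k then 1 else 0) := by
      intro k; rw [huw, psum_add, psum_xvar]
    have huB' : ∀ x, B ≤ x → u' x = 0 := by
      intro x hx
      simp only [hu']
      rw [if_neg (by omega)]
      exact huB x hx
    have hstab : ∀ k, i < k → psum u k = psum u B := by
      intro k hk
      rw [psum_stable higr hk, psum_stable higr (by omega : i + 1 ≤ B)]
    have hle' : ∀ k, psum v k ≤ psum u' k := by
      intro k
      have h1 := hpu k
      rcases Nat.lt_or_ge i k with hik | hik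
      · rw [if_pos hik] at h1
        have h2 := hstab k hik
        have h3 : psum v k ≤ psum v B := by
          rcases Nat.lt_or_ge k B with h | h
          · exact psum_mono v (le_of_lt h)
          · rw [psum_stable hvB h]
        omega
      · rw [if_neg (by omega)] at h1
        have := hle k; omega
    have hdeg' : psum u' B = psum v B + n := by
      have h1 := hpu B
      rw [if_pos hiB] at h1
      omega
    exact Relation.ReflTransGen.head hstep (IHn u' huB' hle' hdeg')

/-- The key converse: pointwise domination of partial sums gives the strongly
stable order, for finitely supported exponent vectors. -/
lemma stGE_of_psum_le {u v : ℕ → ℕ} (hu : (Function.support u).Finite)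
    (hv : (Function.support v).Finite) (h : ∀ k, psum v k ≤ psum u k) : stGE u v := by
  obtain ⟨Bu, hBu⟩ := hu.bddAbove
  obtain ⟨Bv, hBv⟩ := hv.bddAbove
  set B := max Bu Bv + 1 with hB
  have huB : ∀ j, B ≤ j → u j = 0 := by
    intro j hj
    by_contra hc
    have := hBu (Function.mem_support.2 hc)
    omega
  have hvB : ∀ j, B ≤ j → v j = 0 := by
    intro j hj
    by_contra hc
    have := hBv (Function.mem_support.2 hc)
    omega
  have hd := h B
  exact stGE_of_psum_le_aux v B hvB (psum u B - psum v B) u huB h (by omega)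


/-- From a Galois-type duality `g i ≤ k ↔ i < t k` conclude `t` monotone. -/
lemma gd_t_mono {g : NNhat} {t : ℕ → ℕ} (hgd : ∀ (i k : ℕ), g i ≤ (k : ℕ∞) ↔ i < t k) :
    Monotone t := by
  intro k k' hkk'
  by_contra hc
  push_neg at hc
  have h1 : (t k' : ℕ) < t k := hc
  have h2 : g (t k') ≤ (k : ℕ∞) := (hgd (t k') k).2 h1
  have h3 : t k' < t k' := (hgd (t k') k').1 (le_trans h2 (by exact_mod_cast hkk'))
  omega

/-- From the duality conclude `g` monotone. -/
lemma gd_g_mono {g : NNhat} {t : ℕ → ℕ} (hgd : ∀ (i k : ℕ), g i ≤ (k : ℕ∞) ↔ i < t k) :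
    Monotone g := by
  intro i i' hii'
  rcases eq_or_ne (g i') ⊤ with h | h
  · rw [h]; exact le_top
  · have hco : ((g i').toNat : ℕ∞) = g i' := ENat.coe_toNat h
    have h1 : i' < t (g i').toNat := (hgd i' _).1 (le_of_eq hco.symm)
    have h2 : g i ≤ ((g i').toNat : ℕ∞) := (hgd i _).2 (by omega)
    rwa [hco] at h2

/-- `Gmap` at `0` from the duality. -/
lemma gd_Gmap_zero {g : NNhat} {t : ℕ → ℕ} (hgd : ∀ (i k : ℕ), g i ≤ (k : ℕ∞) ↔ i < t k) :
    Gmap g 0 = t 0 := by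
  have hset : {i : ℕ | g i = ((0 : ℕ) : ℕ∞)} = Set.Iio (t 0) := by
    ext i
    simp only [Set.mem_setOf_eq, Set.mem_Iio, Nat.cast_zero]
    rw [← hgd i 0]
    exact ⟨le_of_eq, fun h => le_antisymm h zero_le ⟩
  show Nat.card ({i : ℕ | g i = ((0:ℕ) : ℕ∞)} : Set ℕ) = t 0
  rw [hset, Nat.card_eq_card_toFinset]
  simp

/-- `Gmap` at `j+1` from the duality. -/
lemma gd_Gmap_succ {g : NNhat} {t : ℕ → ℕ} (hgd : ∀ (i k : ℕ), g i ≤ (k : ℕ∞) ↔ i < t k)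
    (j : ℕ) : Gmap g (j+1) = t (j+1) - t j := by
  have hset : ∀ i, g i = ((j+1 : ℕ) : ℕ∞) ↔ (t j ≤ i ∧ i < t (j+1)) := by
    intro i
    constructor
    · intro h
      constructor
      · by_contra hc
        push_neg at hc
        have := (hgd i j).2 hc
        rw [h] at this
        exact absurd this (by exact_mod_cast (by omega : ¬ (j+1 : ℕ) ≤ j))
      · exact (hgd i (j+1)).1 (le_of_eq h)
    · rintro ⟨h1, h2⟩
      have hle : g i ≤ ((j+1 : ℕ) : ℕ∞) := (hgd i (j+1)).2 h2
      have hgt : ¬ g i ≤ ((j : ℕ) : ℕ∞) := fun hc => by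
        have := (hgd i j).1 hc; omega
      have hgt' : ((j : ℕ) : ℕ∞) < g i := not_le.1 hgt
      have h3 : ((j : ℕ) : ℕ∞) + 1 ≤ g i :=
        (ENat.add_one_le_iff (by simp : ((j:ℕ) : ℕ∞) ≠ ⊤)).2 hgt'
      have : ((j+1 : ℕ) : ℕ∞) ≤ g i := by push_cast; exact_mod_cast h3
      exact le_antisymm hle this
  have hseteq : {i : ℕ | g i = ((j+1:ℕ) : ℕ∞)} = Set.Ico (t j) (t (j+1)) := by
    ext i
    simpa [Set.mem_Ico] using hset i
  show Nat.card ({i : ℕ | g i = ((j+1:ℕ) : ℕ∞)} : Set ℕ) = t (j+1) - t j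
  rw [hseteq, Nat.card_eq_card_toFinset]
  simp

/-- Partial sums of `Gmap g` are `t`. -/
lemma gd_psum_Gmap {g : NNhat} {t : ℕ → ℕ} (hgd : ∀ (i k : ℕ), g i ≤ (k : ℕ∞) ↔ i < t k)
    (k : ℕ) : psum (Gmap g) (k+1) = t k := by
  induction k with
  | zero => rw [psum_succ, psum_zero, gd_Gmap_zero hgd]; omega
  | succ n ih =>
    rw [psum_succ, ih, gd_Gmap_succ hgd]
    have := gd_t_mono hgd (by omega : n ≤ n + 1)
    omega

/-- Monotone bounded sequences of naturals are eventually constant. -/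
lemma exists_eventually_const {t : ℕ → ℕ} (hmono : Monotone t) {N : ℕ}
    (hbd : ∀ k, t k ≤ N) : ∃ K, ∀ k, K ≤ k → t k = t K := by
  have hfin : (Set.range t).Finite := (Set.finite_Iic N).subset (by
    rintro x ⟨k, rfl⟩; exact hbd k)
  have hne : (Set.range t).Nonempty := ⟨t 0, 0, rfl⟩
  have hbdd : BddAbove (Set.range t) := hfin.bddAbove
  obtain ⟨K, hK⟩ := Nat.sSup_mem hne hbdd
  refine ⟨K, fun k hk => ?_⟩
  have h1 : t K ≤ t k := hmono hk
  have h2 : t k ≤ sSup (Set.range t) := le_csSup hbdd ⟨k, rfl⟩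
  omega


/-- The dual `t` of a map `g` with cofinally large values. -/
def tOf (g : NNhat) : ℕ → ℕ := fun k => sInf {i : ℕ | (k : ℕ∞) < g i}

lemma tOf_gd {g : NNhat} (hg : Monotone g) (hlarge : ∀ k : ℕ, ∃ i, (k : ℕ∞) < g i) :
    ∀ (i k : ℕ), g i ≤ (k : ℕ∞) ↔ i < tOf g k := by
  intro i k
  have hne : {i : ℕ | (k : ℕ∞) < g i}.Nonempty := hlarge k
  constructor
  · intro h
    by_contra hc
    push_neg at hc
    have hmem : sInf {i : ℕ | (k : ℕ∞) < g i} ∈ {i : ℕ | (k : ℕ∞) < g i} :=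
      Nat.sInf_mem hne
    have : (k : ℕ∞) < g i := lt_of_lt_of_le hmem (hg hc)
    exact absurd h (not_le.2 this)
  · intro h
    by_contra hc
    push_neg at hc
    have h2 : sInf {i : ℕ | (k : ℕ∞) < g i} ≤ i := Nat.sInf_le hc
    unfold tOf at h
    omega

open Classical in
/-- The map `gd t` built from a monotone `t : ℕ → ℕ`. -/
def gdm (t : ℕ → ℕ) : NNhat := fun i =>
  if h : ∃ k, i < t k then ((Nat.find h : ℕ) : ℕ∞) else ⊤

lemma gdm_gd {t : ℕ → ℕ} (ht : Monotone t) :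
    ∀ (i k : ℕ), gdm t i ≤ (k : ℕ∞) ↔ i < t k := by
  intro i k
  unfold gdm
  split
  · next h =>
    rw [Nat.cast_le, Nat.find_le_iff]
    constructor
    · rintro ⟨m, hmk, hm⟩
      exact lt_of_lt_of_le hm (ht hmk)
    · intro hk
      exact ⟨k, le_refl k, hk⟩
  · next h =>
    push_neg at h
    have h1 : ¬ ((⊤:ℕ∞) ≤ (k:ℕ∞)) := by simp
    have h2 : ¬ i < t k := by have := h k; omega
    exact iff_of_false h1 h2

/-- From the dual data of two maps, first-difference domination gives `lexGT`. -/
lemma lexGT_of_duals {f g : NNhat} {T t : ℕ → ℕ}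
    (hgdf : ∀ (i k : ℕ), f i ≤ (k : ℕ∞) ↔ i < T k)
    (hgdg : ∀ (i k : ℕ), g i ≤ (k : ℕ∞) ↔ i < t k)
    {s : ℕ} (hle : ∀ k < s, T k ≤ t k) (hs : T s < t s) : lexGT f g := by
  classical
  have hex : ∃ k, T k < t k := ⟨s, hs⟩
  set k₀ := Nat.find hex with hk₀def
  have hk₀ : T k₀ < t k₀ := Nat.find_spec hex
  have hk₀s : k₀ ≤ s := Nat.find_le hs
  have hpre : ∀ k < k₀, t k = T k := by
    intro k hk
    have h1 := Nat.find_min hex hk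
    have h2 := hle k (by omega)
    omega
  set i₀ := T k₀ with hi₀
  refine ⟨i₀, ?_, ?_⟩
  · intro i hi
    -- f i = g i for i < i₀
    have hiff : ∀ m : ℕ, f i ≤ (m : ℕ∞) ↔ g i ≤ (m : ℕ∞) := by
      intro m
      rcases Nat.lt_or_ge m k₀ with hm | hm
      · rw [hgdf i m, hgdg i m, hpre m hm]
      · have hf : f i ≤ (m : ℕ∞) := by
          have : f i ≤ (k₀ : ℕ∞) := (hgdf i k₀).2 (by omega)
          exact le_trans this (by exact_mod_cast hm)
        have hg : g i ≤ (m : ℕ∞) := by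
          have : g i ≤ (k₀ : ℕ∞) := (hgdg i k₀).2 (by omega)
          exact le_trans this (by exact_mod_cast hm)
        exact iff_of_true hf hg
    have hf0 : f i ≤ (k₀ : ℕ∞) := (hgdf i k₀).2 (by omega)
    have hg0 : g i ≤ (k₀ : ℕ∞) := (hgdg i k₀).2 (by omega)
    have hfne : f i ≠ ⊤ := fun hc => by rw [hc] at hf0; simp at hf0
    have hgne : g i ≠ ⊤ := fun hc => by rw [hc] at hg0; simp at hg0
    have e1 : f i ≤ g i := by
      have h := (hiff (g i).toNat).2 (le_of_eq (ENat.coe_toNat hgne).symm)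
      rwa [ENat.coe_toNat hgne] at h
    have e2 : g i ≤ f i := by
      have h := (hiff (f i).toNat).1 (le_of_eq (ENat.coe_toNat hfne).symm)
      rwa [ENat.coe_toNat hfne] at h
    exact le_antisymm e1 e2
  · -- g i₀ < f i₀
    have h1 : g i₀ ≤ (k₀ : ℕ∞) := (hgdg i₀ k₀).2 hk₀
    have h2 : ¬ f i₀ ≤ (k₀ : ℕ∞) := fun hc => by
      have := (hgdf i₀ k₀).1 hc; omega
    exact lt_of_le_of_lt h1 (not_le.1 h2)


lemma psum_Lmap {h : NNhat} (hmono : Monotone h) (hne : ∀ n, h n ≠ ⊤) (k : ℕ) :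
    psum (Lmap h) (k+1) = (h k).toNat := by
  induction k with
  | zero =>
    rw [psum_succ, psum_zero]
    show 0 + (h 0).toNat = (h 0).toNat
    omega
  | succ n ih =>
    rw [psum_succ, ih]
    show (h n).toNat + ((h (n+1)).toNat - (h n).toNat) = (h (n+1)).toNat
    have hle : (h n).toNat ≤ (h (n+1)).toNat :=
      ENat.toNat_le_toNat (hmono (by omega : n ≤ n + 1)) (hne (n+1))
    omega

lemma support_finite_of_psum_ec {u : ℕ → ℕ} {K : ℕ}
    (hK : ∀ k, K ≤ k → psum u (k+1) = psum u (K+1)) :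
    (Function.support u).Finite := by
  apply (Set.finite_Iio (K+1)).subset
  intro j hj
  simp only [Set.mem_Iio]
  by_contra hc
  push_neg at hc
  have hj0 : u j ≠ 0 := hj
  obtain ⟨m, rfl⟩ : ∃ m, j = m + 1 := ⟨j - 1, by omega⟩
  have h1 := hK (m+1) (by omega)
  have h2 := hK m (by omega)
  have h3 := psum_succ u (m+1)
  omega

lemma genB_val_lt {a : ℕ → ℕ} {j r : ℕ} (h : j+1 < r) : genB a r j = a (j+1) - a j := by
  unfold genB; rw [if_pos h]

lemma genB_val_eq {a : ℕ → ℕ} {j r : ℕ} (h : j+1 = r) : genB a r j = a r - a (r-1) + 1 := by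
  unfold genB; rw [if_neg (show ¬ (j+1 < r) by omega), if_pos h]

lemma genB_val_gt {a : ℕ → ℕ} {j r : ℕ} (h : r < j+1) : genB a r j = 0 := by
  unfold genB; rw [if_neg (show ¬ (j+1 < r) by omega), if_neg (show ¬ (j+1 = r) by omega)]

/-- `genB` partial sums. -/
lemma psum_genB {a b : ℕ → ℕ} (ha0 : a 0 = 1) (ha : ∀ i, a (i+1) = b i + 1)
    (hb : Monotone b) {r : ℕ} (hr : 1 ≤ r) (k : ℕ) :
    psum (genB a r) (k+1) = if k + 1 < r then b k else b (r-1) + 1 := by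
  induction k with
  | zero =>
    rw [psum_succ, psum_zero]
    rcases Nat.lt_or_ge (0+1) r with h1 | h1
    · rw [genB_val_lt h1, if_pos h1, ha 0, ha0]
      omega
    · have h2 : r = 1 := by omega
      subst h2
      rw [genB_val_eq rfl, if_neg (show ¬ ((0:ℕ)+1 < 1) by omega)]
      norm_num
      rw [ha 0, ha0]
      omega
  | succ n ih =>
    rw [psum_succ, ih]
    rcases Nat.lt_or_ge (n+1+1) r with h1 | h1
    · rw [genB_val_lt h1, if_pos (show n+1 < r by omega), if_pos h1, ha (n+1), ha n]
      have := hb (show n ≤ n+1 by omega)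
      omega
    · rcases Nat.eq_or_lt_of_le h1 with h2 | h2
      · rw [genB_val_eq h2.symm, if_pos (show n+1 < r by omega),
          if_neg (show ¬ (n+1+1 < r) by omega)]
        have h3 : r - 1 = n + 1 := by omega
        rw [h3]
        have e1 : a r = b (n+1) + 1 := by
          rw [show r = (n+1)+1 by omega]; exact ha (n+1)
        have e2 := ha n
        have := hb (show n ≤ n+1 by omega)
        omega
      · rw [genB_val_gt (show r < n+1+1 by omega), if_neg (show ¬ (n+1 < r) by omega),
          if_neg (show ¬ (n+1+1 < r) by omega)]

lemma genB_support {a : ℕ → ℕ} (r : ℕ) : ∀ j, r ≤ j → genB a r j = 0 := by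
  intro j hj
  exact genB_val_gt (by omega)

lemma psum_genA {a T : ℕ → ℕ} {r : ℕ} (hr : 1 ≤ r)
    (hT : ∀ i k : ℕ, a (i+1) - 1 ≤ k ↔ i < T k) (k : ℕ) :
    psum (genA a r) (k+1) = (min (T k + 1) r - 1) + (if a r - 2 ≤ k then 1 else 0) := by
  classical
  have hcard : ∀ j, Nat.card {i : ℕ // 1 ≤ i ∧ i < r ∧ a i - 1 = j}
      = ((Finset.Ico 1 r).filter (fun i => a i - 1 = j)).card := by
    intro j
    have hset : {i : ℕ | 1 ≤ i ∧ i < r ∧ a i - 1 = j}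
        = ↑((Finset.Ico 1 r).filter (fun i => a i - 1 = j)) := by
      ext i; simp [Finset.mem_Ico, and_assoc]
    show Nat.card ({i : ℕ | 1 ≤ i ∧ i < r ∧ a i - 1 = j} : Set ℕ) = _
    rw [hset, Nat.card_coe_set_eq, Set.ncard_coe_finset]
  unfold psum genA
  rw [Finset.sum_add_distrib]
  congr 1
  · calc ∑ j ∈ Finset.range (k+1), Nat.card {i : ℕ // 1 ≤ i ∧ i < r ∧ a i - 1 = j}
        = ∑ j ∈ Finset.range (k+1), ∑ i ∈ Finset.Ico 1 r, (if a i - 1 = j then 1 else 0) := by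
          refine Finset.sum_congr rfl fun j _ => ?_
          rw [hcard j, Finset.card_filter]
      _ = ∑ i ∈ Finset.Ico 1 r, ∑ j ∈ Finset.range (k+1), (if a i - 1 = j then 1 else 0) :=
          Finset.sum_comm
      _ = ∑ i ∈ Finset.Ico 1 r, (if a i - 1 ≤ k then 1 else 0) := by
          refine Finset.sum_congr rfl fun i _ => ?_
          rw [Finset.sum_ite_eq (Finset.range (k+1)) (a i - 1) (fun _ => 1)]
          simp [Nat.lt_succ_iff]
      _ = ((Finset.Ico 1 r).filter (fun i => a i - 1 ≤ k)).card := by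
          rw [Finset.card_filter]
      _ = (Finset.Ico 1 (min (T k + 1) r)).card := by
          congr 1
          ext i
          simp only [Finset.mem_filter, Finset.mem_Ico, lt_min_iff]
          constructor
          · rintro ⟨⟨h1, h2⟩, h3⟩
            obtain ⟨m, rfl⟩ : ∃ m, i = m+1 := ⟨i-1, by omega⟩
            have := (hT m k).1 h3
            exact ⟨h1, by omega, h2⟩
          · rintro ⟨h1, h2, h3⟩
            obtain ⟨m, rfl⟩ : ∃ m, i = m+1 := ⟨i-1, by omega⟩
            have := (hT m k).2 (by omega)
            exact ⟨⟨h1, h3⟩, this⟩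
      _ = min (T k + 1) r - 1 := by rw [Nat.card_Ico]
  · rw [Finset.sum_ite_eq (Finset.range (k+1)) (a r - 2) (fun _ => 1)]
    simp [Nat.lt_succ_iff]

lemma genA_support_finite {a T : ℕ → ℕ} {r : ℕ} (hr : 1 ≤ r)
    (hT : ∀ i k : ℕ, a (i+1) - 1 ≤ k ↔ i < T k) :
    (Function.support (genA a r)).Finite := by
  apply support_finite_of_psum_ec (K := a r - 1)
  intro k hk
  have e : a (r-1+1) = a r := by rw [show r-1+1 = r by omega]
  have h1 : r - 1 < T k := (hT (r-1) k).1 (by omega)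
  have h2 : r - 1 < T (a r - 1) := (hT (r-1) (a r - 1)).1 (by omega)
  rw [psum_genA hr hT k, psum_genA hr hT (a r - 1)]
  have : a r - 2 ≤ k := by omega
  rw [if_pos this, if_pos (show a r - 2 ≤ a r - 1 by omega)]
  omega


theorem stmt16b (f : NNhat) (hf : Monotone f) (hfin : ∀ n, f n ≠ ⊤)
    (hunb : ∀ N : ℕ, ∃ n, (N : ℕ∞) < f n)
    (a : ℕ → ℕ) (ha0 : a 0 = 1) (ha : ∀ i : ℕ, a (i + 1) = (f i).toNat + 1) :
    ({u | ∃ h : NNhat, Monotone h ∧ SmallMap h ∧ lexGT h f ∧ u = Lmap h} =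
      sstSpan {v | ∃ r : ℕ, 1 ≤ r ∧ v = genB a r}) := by
  classical
  set b : ℕ → ℕ := fun i => (f i).toNat with hbdef
  have hbf : ∀ i, ((b i : ℕ) : ℕ∞) = f i := fun i => ENat.coe_toNat (hfin i)
  have hbmono : Monotone b := fun i j hij => ENat.toNat_le_toNat (hf hij) (hfin j)
  have ha' : ∀ i, a (i+1) = b i + 1 := ha
  ext u
  constructor
  · rintro ⟨h, hm, hs, hlex, rfl⟩
    obtain ⟨N, hN⟩ := hs
    have hhfin : ∀ n, h n ≠ ⊤ := by
      intro n hc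
      have := hN n
      rw [hc] at this
      exact absurd this (by simp)
    set H : ℕ → ℕ := fun k => (h k).toNat with hHdef
    have HP : ∀ k, psum (Lmap h) (k+1) = H k := psum_Lmap hm hhfin
    have Hmono : Monotone H := fun i j hij => ENat.toNat_le_toNat (hm hij) (hhfin j)
    have HN : ∀ k, H k ≤ N := by
      intro k
      have h1 := hN k
      have : (H k : ℕ∞) ≤ (N : ℕ∞) := by
        rw [ENat.coe_toNat (hhfin k)]; exact h1
      exact_mod_cast this
    obtain ⟨r, hpre, hgt⟩ := hlex
    have hHr : b r < H r := by
      have : (b r : ℕ∞) < (H r : ℕ∞) := by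
        rw [hbf r, ENat.coe_toNat (hhfin r)]; exact hgt
      exact_mod_cast this
    have hHpre : ∀ i, i < r → H i = b i := by
      intro i hi
      show (h i).toNat = (f i).toNat
      rw [hpre i hi]
    -- support of Lmap h finite
    obtain ⟨K, hK⟩ := exists_eventually_const Hmono HN
    have hsuppL : (Function.support (Lmap h)).Finite := by
      apply support_finite_of_psum_ec (K := K)
      intro k hk
      rw [HP k, HP K, hK k hk]
    have hsuppB : (Function.support (genB a (r+1))).Finite := by
      apply (Set.finite_Iio (r+1)).subset
      intro j hj
      simp only [Set.mem_Iio]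
      by_contra hc
      exact hj (genB_support (r+1) j (by omega))
    refine ⟨genB a (r+1), ⟨r+1, by omega, rfl⟩, ?_⟩
    apply stGE_of_psum_le hsuppL hsuppB
    intro m
    cases m with
    | zero => rw [psum_zero, psum_zero]
    | succ k =>
      rw [psum_genB ha0 ha' hbmono (by omega) k, HP k]
      rcases Nat.lt_or_ge (k+1) (r+1) with h1 | h1
      · rw [if_pos h1, hHpre k (by omega)]
      · rw [if_neg (by omega)]
        have h2 : H r ≤ H k := Hmono (by omega)
        have h3 : r + 1 - 1 = r := by omega
        rw [h3]
        omega
  · rintro ⟨gen, ⟨r, hr1, rfl⟩, hst⟩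
    have hsuppB : (Function.support (genB a r)).Finite := by
      apply (Set.finite_Iio r).subset
      intro j hj
      simp only [Set.mem_Iio]
      by_contra hc
      exact hj (genB_support r j (by omega))
    have hsuppv : (Function.support u).Finite := stGE_support hst hsuppB
    have hdom := stGE_psum_le hst
    set H : ℕ → ℕ := fun k => psum u (k+1) with hHdef
    have Hmono : Monotone H := fun i j hij => psum_mono u (by omega)
    obtain ⟨B0, hB0⟩ := hsuppv.bddAbove
    have huB : ∀ j, B0 + 1 ≤ j → u j = 0 := by
      intro j hj
      by_contra hc
      have := hB0 (Function.mem_support.2 hc)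
      omega
    have HNbd : ∀ k, H k ≤ psum u (B0+1) := by
      intro k
      rcases Nat.lt_or_ge k (B0+1) with h1 | h1
      · exact psum_mono u (by omega)
      · rw [hHdef]
        simp only
        rw [psum_stable huB (by omega)]
    set h : NNhat := fun k => ((H k : ℕ) : ℕ∞) with hhdef
    have hm : Monotone h := fun i j hij => by
      simp only [hhdef, Nat.cast_le]
      exact Hmono hij
    have hsm : SmallMap h := ⟨psum u (B0+1), fun n => by
      simp only [hhdef, Nat.cast_le]
      exact HNbd n⟩
    have hLm : Lmap h = u := by
      funext j
      cases j with
      | zero =>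
        show (h 0).toNat = u 0
        simp only [hhdef, ENat.toNat_coe]
        rw [hHdef]
        simp only
        rw [psum_succ, psum_zero]
        omega
      | succ n =>
        show (h (n+1)).toNat - (h n).toNat = u (n+1)
        simp only [hhdef, ENat.toNat_coe]
        have h1 : H (n+1) = H n + u (n+1) := psum_succ u (n+1)
        omega
    -- lexGT h f
    set s : ℕ := r - 1 with hsdef
    have hHs : b s + 1 ≤ H s := by
      have h1 := hdom (s+1)
      rw [psum_genB ha0 ha' hbmono hr1 s] at h1
      rw [if_neg (by omega)] at h1
      exact h1
    have hex : ∃ k, H k ≠ b k := ⟨s, by omega⟩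
    set k₀ := Nat.find hex with hk₀def
    have hk₀ : H k₀ ≠ b k₀ := Nat.find_spec hex
    have hk₀le : k₀ ≤ s := Nat.find_le (show H s ≠ b s by omega)
    have hk₀pre : ∀ i, i < k₀ → H i = b i := by
      intro i hi
      have := Nat.find_min hex hi
      omega
    have hk₀gt : b k₀ < H k₀ := by
      rcases Nat.lt_or_ge (k₀+1) r with h1 | h1
      · have h2 := hdom (k₀+1)
        rw [psum_genB ha0 ha' hbmono hr1 k₀, if_pos h1] at h2
        have e0 : psum u (k₀+1) = H k₀ := rfl
        omega
      · have hks : k₀ = s := by omega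
        rw [hks] at hk₀ ⊢
        omega
    refine ⟨h, hm, hsm, ⟨k₀, ?_, ?_⟩, hLm.symm⟩
    · intro i hi
      show ((H i : ℕ) : ℕ∞) = f i
      rw [hk₀pre i hi, hbf i]
    · show f k₀ < ((H k₀ : ℕ) : ℕ∞)
      rw [← hbf k₀]
      exact_mod_cast hk₀gt

theorem stmt16a (f : NNhat) (hf : Monotone f) (hfin : ∀ n, f n ≠ ⊤)
    (hunb : ∀ N : ℕ, ∃ n, (N : ℕ∞) < f n)
    (a : ℕ → ℕ) (ha0 : a 0 = 1) (ha : ∀ i : ℕ, a (i + 1) = (f i).toNat + 1) :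
    ({u | ∃ g : NNhat, Monotone g ∧ LargeMap g ∧ lexGT f g ∧ u = Gmap g} =
      sstSpan {v | ∃ r : ℕ, 1 ≤ r ∧ a (r - 1) < a r ∧ v = genA a r}) := by
  classical
  set b : ℕ → ℕ := fun i => (f i).toNat with hbdef
  have hbf : ∀ i, ((b i : ℕ) : ℕ∞) = f i := fun i => ENat.coe_toNat (hfin i)
  have hbmono : Monotone b := fun i j hij => ENat.toNat_le_toNat (hf hij) (hfin j)
  have ha' : ∀ i, a (i+1) = b i + 1 := ha
  have hapos : ∀ i, 1 ≤ a i := by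
    intro i
    cases i with
    | zero => omega
    | succ n => rw [ha' n]; omega
  set T : ℕ → ℕ := tOf f with hTdef
  have hgdf : ∀ (i k : ℕ), f i ≤ (k : ℕ∞) ↔ i < T k := tOf_gd hf hunb
  have hT_of : ∀ i k : ℕ, a (i+1) - 1 ≤ k ↔ i < T k := by
    intro i k
    rw [ha' i, ← hgdf i k, ← hbf i, Nat.cast_le]
    omega
  ext u
  constructor
  · rintro ⟨g, hgmono, hglarge, hlex, rfl⟩
    obtain ⟨n₀, hn₀⟩ := hglarge
    have hglarge' : ∀ k : ℕ, ∃ i, (k : ℕ∞) < g i := fun k =>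
      ⟨n₀, by rw [hn₀]; exact ENat.coe_lt_top k⟩
    set t : ℕ → ℕ := tOf g with htdef
    have hgd : ∀ (i k : ℕ), g i ≤ (k : ℕ∞) ↔ i < t k := tOf_gd hgmono hglarge'
    have htmono : Monotone t := gd_t_mono hgd
    obtain ⟨r, hpre, hlt⟩ := hlex
    have hgrne : g r ≠ ⊤ := by
      intro hc
      rw [hc] at hlt
      exact absurd hlt (by simp)
    set s : ℕ := (g r).toNat with hsdef
    have hs : (s : ℕ∞) = g r := ENat.coe_toNat hgrne
    have key1 : ∀ k, k < s → t k = T k := by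
      intro k hk
      have hiff : ∀ i, i < t k ↔ i < T k := by
        intro i
        rw [← hgd i k, ← hgdf i k]
        rcases Nat.lt_or_ge i r with hi | hi
        · rw [hpre i hi]
        · have h1 : (k : ℕ∞) < g i := by
            calc (k : ℕ∞) < (s : ℕ∞) := by exact_mod_cast hk
            _ = g r := hs
            _ ≤ g i := hgmono hi
          have h2 : (k : ℕ∞) < f i := by
            calc (k : ℕ∞) < (s : ℕ∞) := by exact_mod_cast hk
            _ = g r := hs
            _ < f r := hlt
            _ ≤ f i := hf hi
          exact iff_of_false (not_le.2 h1) (not_le.2 h2)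
      have i1 := hiff (t k)
      have i2 := hiff (T k)
      omega
    have key2 : r < t s := (hgd r s).1 (le_of_eq hs.symm)
    have key3 : s < b r := by
      have : (s : ℕ∞) < (b r : ℕ∞) := by rw [hs, hbf r]; exact hlt
      exact_mod_cast this
    have key4 : ∀ m, r = m + 1 → b m ≤ s := by
      intro m hm
      have h1 : f m = g m := hpre m (by omega)
      have h2 : g m ≤ g r := hgmono (by omega)
      have : (b m : ℕ∞) ≤ (s : ℕ∞) := by rw [hbf m, hs, h1]; exact h2
      exact_mod_cast this
    have hcond : a ((r+1) - 1) < a (r+1) := by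
      have e : (r+1) - 1 = r := by omega
      rw [e, ha' r]
      cases r with
      | zero => omega
      | succ m =>
        rw [ha' m]
        have := key4 m rfl
        omega
    -- support of Gmap g
    have hbd : ∀ k, t k ≤ n₀ := by
      intro k
      apply Nat.sInf_le
      show (k : ℕ∞) < g n₀
      rw [hn₀]
      exact ENat.coe_lt_top k
    obtain ⟨K, hK⟩ := exists_eventually_const htmono hbd
    have hsuppG : (Function.support (Gmap g)).Finite := by
      apply support_finite_of_psum_ec (K := K)
      intro k hk
      rw [gd_psum_Gmap hgd k, gd_psum_Gmap hgd K, hK k hk]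
    refine ⟨genA a (r+1), ⟨r+1, by omega, hcond, rfl⟩, ?_⟩
    apply stGE_of_psum_le hsuppG (genA_support_finite (by omega) hT_of)
    intro m
    cases m with
    | zero => rw [psum_zero, psum_zero]
    | succ k =>
      rw [psum_genA (by omega) hT_of k, gd_psum_Gmap hgd k]
      have e1 : a (r+1) = b r + 1 := ha' r
      rcases Nat.lt_or_ge k s with hk | hk
      · rw [if_neg (show ¬ (a (r+1) - 2 ≤ k) by omega)]
        have := key1 k hk
        omega
      · have h5 : t s ≤ t k := htmono hk
        rcases le_or_gt (a (r+1) - 2) k with h6 | h6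
        · rw [if_pos h6]; omega
        · rw [if_neg (by omega)]; omega
  · rintro ⟨gen, ⟨r, hr1, hcond, rfl⟩, hst⟩
    have hsuppA : (Function.support (genA a r)).Finite := genA_support_finite hr1 hT_of
    have hsuppv : (Function.support u).Finite := stGE_support hst hsuppA
    have hdom := stGE_psum_le hst
    set t : ℕ → ℕ := fun k => psum u (k+1) with htdef
    have htmono : Monotone t := fun i j hij => psum_mono u (by omega)
    set g : NNhat := gdm t with hgdef
    have hgd : ∀ (i k : ℕ), g i ≤ (k : ℕ∞) ↔ i < t k := gdm_gd htmono
    have hgmono : Monotone g := gd_g_mono hgd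
    obtain ⟨B0, hB0⟩ := hsuppv.bddAbove
    have huB : ∀ j, B0 + 1 ≤ j → u j = 0 := by
      intro j hj
      by_contra hc
      have := hB0 (Function.mem_support.2 hc)
      omega
    have htbd : ∀ k, t k ≤ psum u (B0+1) := by
      intro k
      rcases Nat.lt_or_ge k (B0+1) with h1 | h1
      · exact psum_mono u (by omega)
      · show psum u (k+1) ≤ _
        rw [psum_stable huB (by omega)]
    have hglarge : LargeMap g := by
      refine ⟨psum u (B0+1), ?_⟩
      show gdm t (psum u (B0+1)) = ⊤
      rw [gdm, dif_neg]
      push_neg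
      intro k
      exact htbd k
    have hGm : Gmap g = u := by
      funext j
      cases j with
      | zero =>
        rw [gd_Gmap_zero hgd]
        show psum u 1 = u 0
        rw [psum_succ, psum_zero]
        omega
      | succ n =>
        rw [gd_Gmap_succ hgd n]
        show psum u (n+1+1) - psum u (n+1) = u (n+1)
        rw [psum_succ u (n+1)]
        omega
    -- lexGT f g
    set s : ℕ := a r - 2 with hsdef
    have e1 : a r = b (r-1) + 1 := by
      have := ha' (r-1)
      rwa [show r - 1 + 1 = r by omega] at this
    have hbr1 : 1 ≤ b (r-1) := by
      have := hapos (r-1)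
      omega
    have hTs : ∀ k, k ≤ s → T k ≤ r - 1 := by
      intro k hk
      by_contra hc
      push_neg at hc
      have h1 : f (r-1) ≤ (k : ℕ∞) := (hgdf (r-1) k).2 hc
      have h2 : b (r-1) ≤ k := by
        have : ((b (r-1) : ℕ) : ℕ∞) ≤ (k : ℕ∞) := by rw [hbf]; exact h1
        exact_mod_cast this
      omega
    have hle : ∀ k, k < s → T k ≤ t k := by
      intro k hk
      have h1 := hdom (k+1)
      rw [psum_genA hr1 hT_of k] at h1
      rw [if_neg (show ¬ (a r - 2 ≤ k) by omega)] at h1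
      have h2 := hTs k (by omega)
      have e0 : psum u (k+1) = t k := rfl
      omega
    have hstrict : T s < t s := by
      have h1 := hdom (s+1)
      rw [psum_genA hr1 hT_of s] at h1
      rw [if_pos (show a r - 2 ≤ s by omega)] at h1
      have h2 := hTs s (by omega)
      have e0 : psum u (s+1) = t s := rfl
      omega
    exact ⟨g, hgmono, hglarge, lexGT_of_duals hgdf hgd hle hstrict, hGm.symm⟩

/-- for `f` monotone with finite values and unbounded image, with
paper values `a_i` (`a_0 = 1`; in our shifted encoding `a_{i+1} = f(i) + 1`):
(a) `{Γg : g large, g ≺_lex f}` is strongly stably generated by the monomials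
`x_{a_1}⋯x_{a_{r-1}}·x_{a_r - 1}` for `r ≥ 1` with `a_{r-1} < a_r`;
(b) `{Λh : h small, h ≻_lex f}` is strongly stably generated by the monomials
`x_1^{a_1-a_0}⋯x_{r-1}^{a_{r-1}-a_{r-2}} x_r^{a_r-a_{r-1}+1}` for `r ≥ 1`. -/
theorem stmt16 (f : NNhat) (hf : Monotone f) (hfin : ∀ n, f n ≠ ⊤)
    (hunb : ∀ N : ℕ, ∃ n, (N : ℕ∞) < f n)
    (a : ℕ → ℕ) (ha0 : a 0 = 1) (ha : ∀ i : ℕ, a (i + 1) = (f i).toNat + 1) :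
    ({u | ∃ g : NNhat, Monotone g ∧ LargeMap g ∧ lexGT f g ∧ u = Gmap g} =
      sstSpan {v | ∃ r : ℕ, 1 ≤ r ∧ a (r - 1) < a r ∧ v = genA a r}) ∧
    ({u | ∃ h : NNhat, Monotone h ∧ SmallMap h ∧ lexGT h f ∧ u = Lmap h} =
      sstSpan {v | ∃ r : ℕ, 1 ≤ r ∧ v = genB a r}) :=
  ⟨stmt16a f hf hfin hunb a ha0 ha, stmt16b f hf hfin hunb a ha0 ha⟩

end
end

section
/- Let f : {1,…,m} → ℕ be monotone with values a_1 ≤ a_2 ≤ … ≤ a_m, set a_0 = 1, and define f^L ∈ Hom(ℕ,ℕ̂) by f^L(i) = a_i for i ≤ m and f^L(i) = ∞ for i > m, and f_S ∈ Hom(ℕ,ℕ̂) by f_S(i) = a_i for i < m and f_S(i) = a_m + 1 for i ≥ m. Then: (a) the strongly stable ideal { Γg : g large, g ⪯_lex f^L } is strongly stably generated by the monomials x_{a_1}⋯x_{a_{r−1}}·x_{a_r − 1} for 1 ≤ r ≤ m with a_{r−1} < a_r, together with x_{a_1}⋯x_{a_m}; (b) the strongly stable ideal { Λg : g small, g ⪰_lex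 f_S } is strongly stably generated by the monomials x_1^{a_1 − a_0} x_2^{a_2 − a_1} ⋯ x_{r−1}^{a_{r−1} − a_{r−2}} x_r^{a_r − a_{r−1} + 1} for 1 ≤ r ≤ m. These are dual finitely generated universal lex-segment ideals. -/
noncomputable section

/-- The monomial `x_{a_1} ⋯ x_{a_m}` as exponent vector. -/
def topMon (m : ℕ) (a : ℕ → ℕ) : ℕ → ℕ := fun j =>
  Nat.card {i : ℕ // 1 ≤ i ∧ i ≤ m ∧ a i - 1 = j}

/-- `f^L ∈ Hom(ℕ,ℕ̂)`: `f^L(i) = a_i` for `i ≤ m`, `∞` for `i > m`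
(in the shifted encoding). -/
def fLof (m : ℕ) (a : ℕ → ℕ) : NNhat := fun i =>
  if i < m then ((a (i + 1) - 1 : ℕ) : ℕ∞) else ⊤

/-- `f_S ∈ Hom(ℕ,ℕ̂)`: `f_S(i) = a_i` for `i < m`, `a_m + 1` for `i ≥ m`
(in the shifted encoding). -/
def fSof (m : ℕ) (a : ℕ → ℕ) : NNhat := fun i =>
  if i + 1 < m then ((a (i + 1) - 1 : ℕ) : ℕ∞) else ((a m : ℕ) : ℕ∞)


-- ############ partial sums
def PS (u : ℕ → ℕ) : ℕ → ℕ := fun j => ∑ k ∈ Finset.range (j+1), u k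

lemma PS_zero (u : ℕ → ℕ) : PS u 0 = u 0 := by simp [PS]

lemma PS_succ (u : ℕ → ℕ) (j : ℕ) : PS u (j+1) = PS u j + u (j+1) := by
  simp [PS, Finset.sum_range_succ]

lemma PS_mono_idx (u : ℕ → ℕ) : Monotone (PS u) := by
  intro i j hij
  induction j with
  | zero => simpa using (Nat.le_zero.mp hij) ▸ le_rfl
  | succ n ih =>
    rcases Nat.lt_or_ge i (n+1) with h | h
    · exact le_trans (ih (Nat.lt_succ_iff.mp h)) (by rw [PS_succ]; omega)
    · have : i = n + 1 := le_antisymm hij h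
      simp [this]

lemma PS_add (u v : ℕ → ℕ) (j : ℕ) : PS (u + v) j = PS u j + PS v j := by
  simp [PS, Finset.sum_add_distrib]

lemma PS_xvar (i j : ℕ) : PS (xvar i) j = if i ≤ j then 1 else 0 := by
  simp only [PS, xvar]
  rw [Finset.sum_ite_eq' (Finset.range (j+1)) i (fun _ => 1)]
  simp [Nat.lt_succ_iff]

lemma PS_le_of_le {u v : ℕ → ℕ} (h : ∀ i, u i ≤ v i) (j : ℕ) : PS u j ≤ PS v j :=
  Finset.sum_le_sum fun k _ => h k

lemma PS_inj {u v : ℕ → ℕ} (h : ∀ j, PS u j = PS v j) : u = v := by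
  funext j
  cases j with
  | zero => simpa [PS_zero] using h 0
  | succ n => have h1 := h n; have h2 := h (n+1); rw [PS_succ, PS_succ] at h2; omega

lemma PS_stable {u : ℕ → ℕ} {N : ℕ} (hu : ∀ i, N ≤ i → u i = 0) {j : ℕ} (hj : N ≤ j) :
    PS u j = PS u N := by
  induction j with
  | zero => rw [show N = 0 by omega]
  | succ n ih =>
    rcases Nat.lt_or_ge N (n+1) with h | h
    · rw [PS_succ, hu (n+1) (by omega), ih (by omega)]; omega
    · have : N = n + 1 := le_antisymm hj h
      simp [this]

-- stGE basic facts
lemma stGE_of_stStep {u v : ℕ → ℕ} (h : stStep u v) : stGE u v :=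
  Relation.ReflTransGen.single h

lemma stGE_trans {u v w : ℕ → ℕ} (h1 : stGE u v) (h2 : stGE v w) : stGE u w :=
  Relation.ReflTransGen.trans h1 h2

lemma stStep_PS_le {u v : ℕ → ℕ} (h : stStep u v) (j : ℕ) : PS v j ≤ PS u j := by
  rcases h with ⟨i, k, w, hik, hu, hv⟩ | ⟨i, hu⟩
  · subst hu; subst hv
    rw [PS_add, PS_add, PS_xvar, PS_xvar]
    have : (if k ≤ j then 1 else 0) ≤ (if i ≤ j then (1:ℕ) else 0) := by
      split_ifs <;> omega
    omega
  · subst hu; rw [PS_add, PS_xvar]; omega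

lemma stGE_PS_le {u v : ℕ → ℕ} (h : stGE u v) (j : ℕ) : PS v j ≤ PS u j := by
  induction h with
  | refl => exact le_refl _
  | tail _ hstep ih => exact le_trans (stStep_PS_le hstep j) ih


-- ########## dominance: stGE from partial-sum domination
lemma stGE_add_single (v : ℕ → ℕ) (t : ℕ) : ∀ d, stGE (v + singleMon t d) v := by
  intro d
  induction d with
  | zero =>
    have h : v + singleMon t 0 = v := by funext j; simp [singleMon]
    rw [h]
    exact Relation.ReflTransGen.refl
  | succ n ih =>
    refine Relation.ReflTransGen.head (Or.inr ⟨t, ?_⟩) ih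
    funext j
    by_cases h : j = t <;> simp [singleMon, xvar, h] <;> omega

lemma domEq (N : ℕ) : ∀ M : ℕ, ∀ u v : ℕ → ℕ, (∀ i, N ≤ i → u i = 0) →
    (∀ i, N ≤ i → v i = 0) → (∀ j, PS v j ≤ PS u j) → PS u N = PS v N →
    (∑ j ∈ Finset.range N, (PS u j - PS v j)) ≤ M → stGE u v := by
  intro M
  induction M using Nat.strong_induction_on with
  | _ M IH =>
    intro u v hu hv hle hNeq hsum
    by_cases h0 : ∀ j, j < N → PS u j = PS v j
    · have : u = v := by
        apply PS_inj
        intro j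
        rcases Nat.lt_or_ge j N with hj | hj
        · exact h0 j hj
        · rw [PS_stable hu hj, PS_stable hv hj, hNeq]
      exact this ▸ Relation.ReflTransGen.refl
    · push_neg at h0
      have hex : ∃ s, PS v s < PS u s := by
        obtain ⟨j, _, hne⟩ := h0
        exact ⟨j, lt_of_le_of_ne (hle j) (Ne.symm hne)⟩
      have hs : PS v (Nat.find hex) < PS u (Nat.find hex) := Nat.find_spec hex
      set s := Nat.find hex with hs_def
      have hs_min : ∀ j, j < s → PS u j = PS v j := by
        intro j hj
        have := Nat.find_min hex hj
        exact le_antisymm (by omega) (hle j)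
      have hsN : s < N := by
        by_contra hc
        push_neg at hc
        rw [PS_stable hu hc, PS_stable hv hc, hNeq] at hs
        omega
      have husvs : v s < u s := by
        rcases Nat.eq_zero_or_pos s with h0' | h0'
        · rw [h0'] at hs ⊢; rw [PS_zero, PS_zero] at hs; exact hs
        · obtain ⟨n, hn⟩ : ∃ n, s = n + 1 := ⟨s - 1, by omega⟩
          have h1 := hs_min n (by omega)
          rw [hn] at hs ⊢
          rw [PS_succ, PS_succ, h1] at hs
          omega
      have htex : ∃ t, s < t ∧ PS u t = PS v t := ⟨N, hsN, hNeq⟩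
      obtain ⟨hst, hteq⟩ : s < Nat.find htex ∧ PS u (Nat.find htex) = PS v (Nat.find htex) :=
        Nat.find_spec htex
      set t := Nat.find htex with ht_def
      have ht_min : ∀ j, s ≤ j → j < t → PS v j < PS u j := by
        intro j hsj hjt
        rcases Nat.eq_or_lt_of_le hsj with rfl | hlt
        · exact hs
        · have h2 := Nat.find_min htex hjt
          have h3 : PS u j ≠ PS v j := by tauto
          exact lt_of_le_of_ne (hle j) (Ne.symm h3)
      have hvtut : u t < v t := by
        obtain ⟨n, hn⟩ : ∃ n, t = n + 1 := ⟨t - 1, by omega⟩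
        have h1 := ht_min n (by omega) (by omega)
        rw [hn] at hteq ⊢
        rw [PS_succ, PS_succ] at hteq
        omega
      have htN : t < N := by
        by_contra hc
        push_neg at hc
        have := hv t hc
        omega
      have hus : 1 ≤ u s := by omega
      set w : ℕ → ℕ := fun j => if j = s then u s - 1 else u j with hw
      set u' : ℕ → ℕ := w + xvar t with hu'
      have hne_st : s ≠ t := by omega
      have hueq : u = w + xvar s := by
        funext j
        simp only [hw, Pi.add_apply, xvar]
        by_cases hj : j = s <;> simp [hj] <;> omega
      have hstep : stStep u u' := Or.inl ⟨s, t, w, by omega, hueq, rfl⟩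
      have hPSu' : ∀ j, PS u' j = PS u j - (if s ≤ j ∧ j < t then 1 else 0) := by
        intro j
        rw [hu', hueq, PS_add, PS_add, PS_xvar, PS_xvar]
        have := hle j
        have h4 : PS w j + (if s ≤ j then 1 else 0) = PS u j := by
          rw [hueq, PS_add, PS_xvar]
        split_ifs at * <;> omega
      have hle' : ∀ j, PS v j ≤ PS u' j := by
        intro j
        rw [hPSu' j]
        split_ifs with hj
        · have := ht_min j hj.1 hj.2; omega
        · exact hle j
      have hu'supp : ∀ i, N ≤ i → u' i = 0 := by
        intro i hi
        have h1 : u i = 0 := hu i hi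
        have h2 : i ≠ s := by omega
        have h3 : i ≠ t := by omega
        simp only [hu', hw, Pi.add_apply, xvar, if_neg h2, if_neg h3, h1]
      have hNeq' : PS u' N = PS v N := by
        rw [hPSu' N]
        have : ¬ (s ≤ N ∧ N < t) := by omega
        rw [if_neg this, hNeq, Nat.sub_zero]
      have hsum_lt : (∑ j ∈ Finset.range N, (PS u' j - PS v j)) <
          (∑ j ∈ Finset.range N, (PS u j - PS v j)) := by
        apply Finset.sum_lt_sum
        · intro j _
          rw [hPSu' j]
          have := hle j
          split_ifs <;> omega
        · refine ⟨s, Finset.mem_range.mpr hsN, ?_⟩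
          rw [hPSu' s]
          have h1 : s ≤ s ∧ s < t := ⟨le_rfl, hst⟩
          rw [if_pos h1]
          omega
      exact Relation.ReflTransGen.head hstep
        (IH _ (by omega) u' v hu'supp hv hle' hNeq' le_rfl)

lemma Mon_bound {u : ℕ → ℕ} (hu : u ∈ Mon) : ∃ N, ∀ i, N ≤ i → u i = 0 := by
  obtain ⟨Nb, hNb⟩ := hu.bddAbove
  refine ⟨Nb + 1, fun i hi => ?_⟩
  by_contra hc
  have h1 : i ∈ Function.support u := hc
  have := hNb h1
  omega

lemma stGE_of_PS_le {u v : ℕ → ℕ} (hu : u ∈ Mon) (hv : v ∈ Mon)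
    (h : ∀ j, PS v j ≤ PS u j) : stGE u v := by
  obtain ⟨N1, hN1⟩ := Mon_bound hu
  obtain ⟨N2, hN2⟩ := Mon_bound hv
  set N := max N1 N2 with hN
  have hu' : ∀ i, N ≤ i → u i = 0 := fun i hi => hN1 i (by omega)
  have hv' : ∀ i, N ≤ i → v i = 0 := fun i hi => hN2 i (by omega)
  set d := PS u N - PS v N with hd
  set w := v + singleMon N d with hw_def
  have hwsupp : ∀ i, N + 1 ≤ i → w i = 0 := by
    intro i hi
    have h2 : i ≠ N := by omega
    simp only [hw_def, Pi.add_apply, singleMon, hv' i (by omega), if_neg h2]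
  have husupp : ∀ i, N + 1 ≤ i → u i = 0 := fun i hi => hu' i (by omega)
  have hPSw : ∀ j, PS w j = PS v j + (if N ≤ j then d else 0) := by
    intro j
    rw [hw_def, PS_add]
    congr 1
    have h1 : singleMon N d = fun k => d * (xvar N k) := by
      funext k; by_cases h : k = N <;> simp [singleMon, xvar, h]
    rw [h1]
    have h2 : PS (fun k => d * xvar N k) j = d * PS (xvar N) j := by
      simp [PS, Finset.mul_sum]
    rw [h2, PS_xvar]
    split_ifs <;> simp
  have hwle : ∀ j, PS w j ≤ PS u j := by
    intro j
    rw [hPSw j]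
    split_ifs with hj
    · have h1 : PS u j = PS u N := PS_stable hu' hj
      have h2 : PS v j = PS v N := PS_stable hv' hj
      have := h N
      omega
    · exact h j
  have hNeq : PS u (N+1) = PS w (N+1) := by
    rw [hPSw (N+1)]
    have h1 : PS u (N+1) = PS u N := PS_stable hu' (by omega)
    have h2 : PS v (N+1) = PS v N := PS_stable hv' (by omega)
    have := h N
    rw [if_pos (by omega : N ≤ N + 1)]
    omega
  have h1 : stGE u w := domEq (N+1) _ u w husupp hwsupp hwle hNeq le_rfl
  exact stGE_trans h1 (stGE_add_single v N d)

-- ########## lex order lemmas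
lemma lexGE_refl (f : NNhat) : lexGE f f := Or.inl rfl

lemma lexGT_irrefl (f : NNhat) : ¬ lexGT f f := by
  rintro ⟨r, _, hr⟩; exact lt_irrefl _ hr

lemma lexGT_trans {f g h : NNhat} (h1 : lexGT f g) (h2 : lexGT g h) : lexGT f h := by
  obtain ⟨r1, p1, q1⟩ := h1
  obtain ⟨r2, p2, q2⟩ := h2
  rcases lt_trichotomy r1 r2 with hlt | heq | hgt
  · exact ⟨r1, fun i hi => (p1 i hi).trans (p2 i (by omega)), by rw [← p2 r1 hlt]; exact q1⟩
  · subst heq; exact ⟨r1, fun i hi => (p1 i hi).trans (p2 i hi), lt_trans q2 q1⟩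
  · exact ⟨r2, fun i hi => (p1 i (by omega)).trans (p2 i hi), by rw [p1 r2 hgt]; exact q2⟩

lemma lexGT_asymm {f g : NNhat} (h1 : lexGT f g) : ¬ lexGT g f :=
  fun h2 => lexGT_irrefl f (lexGT_trans h1 h2)

lemma lexGE_trans {f g h : NNhat} (h1 : lexGE f g) (h2 : lexGE g h) : lexGE f h := by
  rcases h1 with rfl | h1
  · exact h2
  rcases h2 with rfl | h2
  · exact Or.inr h1
  · exact Or.inr (lexGT_trans h1 h2)

lemma lexGT_total {f g : NNhat} (h : f ≠ g) : lexGT f g ∨ lexGT g f := by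
  have hex : ∃ i, f i ≠ g i := by
    by_contra hc; push_neg at hc; exact h (funext hc)
  have hpre : ∀ i, i < Nat.find hex → f i = g i := by
    intro i hi
    have := Nat.find_min hex hi
    tauto
  rcases lt_or_gt_of_ne (Nat.find_spec hex) with hlt | hgt
  · exact Or.inr ⟨Nat.find hex, fun i hi => (hpre i hi).symm, hlt⟩
  · exact Or.inl ⟨Nat.find hex, hpre, hgt⟩

lemma lexGE_of_le {f g : NNhat} (h : ∀ i, f i ≤ g i) : lexGE g f := by
  by_cases heq : g = f
  · exact Or.inl heq
  · have hex : ∃ i, g i ≠ f i := by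
      by_contra hc; push_neg at hc; exact heq (funext hc)
    refine Or.inr ⟨Nat.find hex, ?_, lt_of_le_of_ne (h _) (Ne.symm (Nat.find_spec hex))⟩
    intro i hi
    have := Nat.find_min hex hi
    tauto

lemma lexGE_not_lexGT {f g : NNhat} (h : lexGE f g) : ¬ lexGT g f := by
  rcases h with rfl | h
  · exact lexGT_irrefl f
  · exact lexGT_asymm h

-- ########## sInf of coe-images
lemma sInf_image_coe_empty {S : Set ℕ} (h : S = ∅) :
    sInf ((fun q : ℕ => (q : ℕ∞)) '' S) = ⊤ := by
  rw [h]; simp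

lemma sInf_image_coe_min {S : Set ℕ} {c : ℕ} (hc : c ∈ S) (hmin : ∀ x ∈ S, c ≤ x) :
    sInf ((fun q : ℕ => (q : ℕ∞)) '' S) = (c : ℕ∞) := by
  refine le_antisymm (sInf_le ⟨c, hc, rfl⟩) (le_sInf ?_)
  rintro x ⟨q, hq, rfl⟩
  show (c : ℕ∞) ≤ (q : ℕ∞)
  exact_mod_cast hmin q hq

-- ########## sortOf
def sortOf (u : ℕ → ℕ) : NNhat := fun p =>
  sInf ((fun q : ℕ => (q : ℕ∞)) '' {j | p < PS u j})

lemma sortOf_mono (u : ℕ → ℕ) : Monotone (sortOf u) := by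
  intro p q hpq
  exact sInf_le_sInf (Set.image_mono (fun j hj => lt_of_le_of_lt hpq hj))

lemma sortOf_le_of_PS_le {u v : ℕ → ℕ} (h : ∀ j, PS u j ≤ PS v j) (p : ℕ) :
    sortOf v p ≤ sortOf u p :=
  sInf_le_sInf (Set.image_mono (fun j hj => lt_of_lt_of_le hj (h j)))

lemma sortOf_top {u : ℕ → ℕ} {p : ℕ} (h : ∀ j, PS u j ≤ p) : sortOf u p = ⊤ := by
  apply sInf_image_coe_empty
  ext j
  simp only [Set.mem_setOf_eq, Set.mem_empty_iff_false, iff_false, not_lt]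
  exact h j

lemma sortOf_large {u : ℕ → ℕ} (hu : u ∈ Mon) : LargeMap (sortOf u) := by
  obtain ⟨N, hN⟩ := Mon_bound hu
  refine ⟨PS u N, sortOf_top fun j => ?_⟩
  rcases le_or_gt j N with hj | hj
  · exact PS_mono_idx u hj
  · rw [PS_stable hN (by omega)]

lemma sortOf_eq_coe {u : ℕ → ℕ} {p c : ℕ} (h1 : p < PS u c) (h2 : ∀ k, p < PS u k → c ≤ k) :
    sortOf u p = (c : ℕ∞) :=
  sInf_image_coe_min h1 h2

-- the set where sortOf takes value j
lemma sortOf_value_set (u : ℕ → ℕ) (j : ℕ) :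
    {p : ℕ | sortOf u p = (j : ℕ∞)} =
      {p : ℕ | (if j = 0 then 0 else PS u (j-1)) ≤ p ∧ p < PS u j} := by
  ext p
  simp only [Set.mem_setOf_eq]
  constructor
  · intro hp
    have hex : ∃ k, p < PS u k := by
      by_contra hc
      push_neg at hc
      rw [sortOf_top hc] at hp
      exact (by simp : ¬ (⊤ : ℕ∞) = (j:ℕ∞)) hp
    have hmin : ∀ x, p < PS u x → Nat.find hex ≤ x := fun x hx => Nat.find_min' hex hx
    have := sortOf_eq_coe (Nat.find_spec hex) hmin
    rw [this] at hp
    have hj : Nat.find hex = j := by exact_mod_cast hp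
    subst hj
    refine ⟨?_, Nat.find_spec hex⟩
    split_ifs with h0
    · omega
    · by_contra hc
      push_neg at hc
      have := hmin (Nat.find hex - 1) hc
      omega
  · rintro ⟨h1, h2⟩
    refine sortOf_eq_coe h2 ?_
    intro k hk
    by_contra hc
    push_neg at hc
    have hkj : k ≤ j - 1 := by omega
    have hj0 : j ≠ 0 := by omega
    rw [if_neg hj0] at h1
    have := PS_mono_idx u hkj
    omega

lemma natCard_Ico (A B : ℕ) : Nat.card {p : ℕ | A ≤ p ∧ p < B} = B - A := by
  have h1 : {p : ℕ | A ≤ p ∧ p < B} = ↑(Finset.Ico A B) := by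
    ext p; simp [Finset.mem_Ico]
  calc Nat.card {p : ℕ | A ≤ p ∧ p < B}
      = ({p : ℕ | A ≤ p ∧ p < B} : Set ℕ).ncard := Nat.card_coe_set_eq _
    _ = ((Finset.Ico A B : Finset ℕ) : Set ℕ).ncard := by rw [h1]
    _ = (Finset.Ico A B).card := Set.ncard_coe_finset _
    _ = B - A := Nat.card_Ico A B

lemma Gmap_sortOf {u : ℕ → ℕ} : Gmap (sortOf u) = u := by
  funext j
  have hs := sortOf_value_set u j
  have : Gmap (sortOf u) j = Nat.card {p : ℕ | sortOf u p = (j : ℕ∞)} := rfl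
  rw [this, hs, natCard_Ico]
  cases j with
  | zero => simp [PS_zero]
  | succ k =>
    rw [if_neg (Nat.succ_ne_zero k), Nat.add_sub_cancel, PS_succ]
    omega

-- ########## Gmap of a monotone large map
section GmapLemmas
open Finset

lemma Gmap_eq_filter {g : NNhat} {n : ℕ} (hn : ∀ i, n ≤ i → g i = ⊤) (j : ℕ) :
    Gmap g j = ((Finset.range n).filter (fun i => g i = (j:ℕ∞))).card := by
  classical
  have h1 : {i : ℕ | g i = (j:ℕ∞)} =
      ↑((Finset.range n).filter (fun i => g i = (j:ℕ∞))) := by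
    ext i
    simp only [Set.mem_setOf_eq, coe_filter, mem_range, Set.mem_setOf_eq]
    constructor
    · intro h
      refine ⟨?_, h⟩
      by_contra hc
      rw [hn i (by omega)] at h
      exact (by simp : ¬ (⊤:ℕ∞) = (j:ℕ∞)) h
    · tauto
  calc Gmap g j = ({i : ℕ | g i = (j:ℕ∞)} : Set ℕ).ncard := Nat.card_coe_set_eq _
    _ = _ := by rw [h1, Set.ncard_coe_finset]

lemma PS_Gmap {g : NNhat} {n : ℕ} (hn : ∀ i, n ≤ i → g i = ⊤) (j : ℕ) :
    PS (Gmap g) j = ((Finset.range n).filter (fun i => g i ≤ (j:ℕ∞))).card := by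
  classical
  have h1 : ∀ t, Gmap g t = ((Finset.range n).filter (fun i => g i = (t:ℕ∞))).card :=
    fun t => Gmap_eq_filter hn t
  unfold PS
  rw [Finset.sum_congr rfl (fun t _ => h1 t)]
  rw [← Finset.card_biUnion]
  · congr 1
    ext i
    simp only [mem_biUnion, mem_range, mem_filter]
    constructor
    · rintro ⟨t, ht, hi, hgi⟩
      exact ⟨hi, by rw [hgi]; exact_mod_cast Nat.lt_succ_iff.mp ht⟩
    · rintro ⟨hi, hgi⟩
      have htop : g i ≠ ⊤ := by
        intro hc
        rw [hc] at hgi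
        exact (by simp : ¬ (⊤:ℕ∞) ≤ (j:ℕ∞)) hgi
      refine ⟨(g i).toNat, ?_, hi, (ENat.coe_toNat htop).symm⟩
      rw [Nat.lt_succ_iff]
      exact ENat.toNat_le_of_le_coe hgi
  · intro t1 _ t2 _ hne
    apply Finset.disjoint_left.mpr
    intro i hi1 hi2
    simp only [mem_filter] at hi1 hi2
    apply hne
    have := hi1.2.symm.trans hi2.2
    exact_mod_cast this

lemma PS_Gmap_lt_iff {g : NNhat} (hg : Monotone g) {n : ℕ} (hn : ∀ i, n ≤ i → g i = ⊤)
    (p j : ℕ) : p < PS (Gmap g) j ↔ g p ≤ (j:ℕ∞) := by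
  classical
  rw [PS_Gmap hn j]
  constructor
  · intro hp
    by_contra hc
    push_neg at hc
    have hsub : (Finset.range n).filter (fun i => g i ≤ (j:ℕ∞)) ⊆ Finset.range p := by
      intro i hi
      simp only [mem_filter, mem_range] at hi ⊢
      by_contra hip
      push_neg at hip
      exact absurd (le_trans (hg hip) hi.2) (not_le.mpr hc)
    have := Finset.card_le_card hsub
    simp only [Finset.card_range] at this
    omega
  · intro hp
    have hpn : p < n := by
      by_contra hc
      push_neg at hc
      rw [hn p hc] at hp
      exact (by simp : ¬ (⊤:ℕ∞) ≤ (j:ℕ∞)) hp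
    have hsub : Finset.range (p+1) ⊆ (Finset.range n).filter (fun i => g i ≤ (j:ℕ∞)) := by
      intro i hi
      simp only [mem_range] at hi
      simp only [mem_filter, mem_range]
      exact ⟨by omega, le_trans (hg (by omega : i ≤ p)) hp⟩
    have := Finset.card_le_card hsub
    simp only [Finset.card_range] at this
    omega

lemma sortOf_Gmap {g : NNhat} (hg : Monotone g) (hlg : LargeMap g) :
    sortOf (Gmap g) = g := by
  obtain ⟨n0, hn0⟩ := hlg
  have hn : ∀ i, n0 ≤ i → g i = ⊤ := fun i hi => top_le_iff.mp (hn0 ▸ hg hi)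
  funext p
  have hiff := PS_Gmap_lt_iff hg hn p
  rcases (eq_or_ne (g p) ⊤) with htop | hfin
  · rw [htop]
    apply sortOf_top
    intro j
    by_contra hc
    push_neg at hc
    have := (hiff j).mp hc
    rw [htop] at this
    exact (by simp : ¬ (⊤:ℕ∞) ≤ (j:ℕ∞)) this
  · set c := (g p).toNat with hc
    have hgc : g p = (c : ℕ∞) := (ENat.coe_toNat hfin).symm
    rw [hgc]
    apply sortOf_eq_coe
    · exact (hiff c).mpr (le_of_eq hgc)
    · intro k hk
      have := (hiff k).mp hk
      rw [hgc] at this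
      exact_mod_cast this

lemma Gmap_Mon {g : NNhat} (hg : Monotone g) (hlg : LargeMap g) : Gmap g ∈ Mon := by
  obtain ⟨n0, hn0⟩ := hlg
  have hn : ∀ i, n0 ≤ i → g i = ⊤ := fun i hi => top_le_iff.mp (hn0 ▸ hg hi)
  apply Set.Finite.subset (((Set.finite_Iio n0).image (fun i => (g i).toNat)))
  intro j hj
  have hj' : Gmap g j ≠ 0 := hj
  rw [Gmap_eq_filter hn j] at hj'
  have : ((Finset.range n0).filter (fun i => g i = (j:ℕ∞))).Nonempty := by
    rw [← Finset.card_pos]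
    omega
  obtain ⟨i, hi⟩ := this
  simp only [Finset.mem_filter, Finset.mem_range] at hi
  refine ⟨i, hi.1, ?_⟩
  show (g i).toNat = j
  rw [hi.2]
  simp

-- characterization of the Γ–lex set
lemma memGammaSet_iff {m : ℕ} {a : ℕ → ℕ} (u : ℕ → ℕ) :
    (∃ g : NNhat, Monotone g ∧ LargeMap g ∧ lexGE (fLof m a) g ∧ u = Gmap g) ↔
      (u ∈ Mon ∧ lexGE (fLof m a) (sortOf u)) := by
  constructor
  · rintro ⟨g, hg, hlg, hlex, rfl⟩
    exact ⟨Gmap_Mon hg hlg, by rw [sortOf_Gmap hg hlg]; exact hlex⟩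
  · rintro ⟨hu, hlex⟩
    exact ⟨sortOf u, sortOf_mono u, sortOf_large hu, hlex, Gmap_sortOf.symm⟩

end GmapLemmas

-- ########## Lmap of a small monotone map
section LmapLemmas

def hOf (u : ℕ → ℕ) : NNhat := fun i => ((PS u i : ℕ) : ℕ∞)

lemma PS_Lmap {h : NNhat} (hmono : Monotone h) (hsm : SmallMap h) (j : ℕ) :
    ((PS (Lmap h) j : ℕ) : ℕ∞) = h j := by
  obtain ⟨N, hN⟩ := hsm
  have hfin : ∀ i, h i ≠ ⊤ := fun i hc => by
    have := hN i
    rw [hc] at this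
    exact (by simp : ¬ (⊤:ℕ∞) ≤ (N:ℕ∞)) this
  induction j with
  | zero =>
    rw [PS_zero]
    show (((h 0).toNat : ℕ) : ℕ∞) = h 0
    exact ENat.coe_toNat (hfin 0)
  | succ k ih =>
    rw [PS_succ]
    have h1 : (h k).toNat ≤ (h (k+1)).toNat :=
      ENat.toNat_le_toNat (hmono (by omega : k ≤ k + 1)) (hfin (k+1))
    have h2 : Lmap h (k+1) = (h (k+1)).toNat - (h k).toNat := rfl
    have h3 : ((PS (Lmap h) k : ℕ) : ℕ∞) = h k := ih
    have h4 : PS (Lmap h) k = (h k).toNat := by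
      have := ENat.coe_toNat (hfin k)
      exact_mod_cast h3.trans this.symm
    rw [h2, h4]
    have h5 : (h k).toNat + ((h (k+1)).toNat - (h k).toNat) = (h (k+1)).toNat := by omega
    rw [h5]
    exact ENat.coe_toNat (hfin (k+1))

lemma hOf_Lmap {h : NNhat} (hmono : Monotone h) (hsm : SmallMap h) : hOf (Lmap h) = h := by
  funext j
  exact PS_Lmap hmono hsm j

lemma Lmap_hOf (u : ℕ → ℕ) : Lmap (hOf u) = u := by
  funext j
  cases j with
  | zero =>
    show ((PS u 0 : ℕ) : ℕ∞).toNat = u 0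
    rw [ENat.toNat_coe, PS_zero]
  | succ k =>
    show ((PS u (k+1) : ℕ) : ℕ∞).toNat - ((PS u k : ℕ) : ℕ∞).toNat = u (k+1)
    rw [ENat.toNat_coe, ENat.toNat_coe, PS_succ]
    omega

lemma hOf_mono (u : ℕ → ℕ) : Monotone (hOf u) := by
  intro i j hij
  show ((PS u i : ℕ) : ℕ∞) ≤ ((PS u j : ℕ) : ℕ∞)
  exact_mod_cast PS_mono_idx u hij

lemma hOf_small {u : ℕ → ℕ} (hu : u ∈ Mon) : SmallMap (hOf u) := by
  obtain ⟨N, hN⟩ := Mon_bound hu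
  refine ⟨PS u N, fun j => ?_⟩
  show ((PS u j : ℕ) : ℕ∞) ≤ ((PS u N : ℕ) : ℕ∞)
  rcases le_or_gt j N with hj | hj
  · exact_mod_cast PS_mono_idx u hj
  · rw [PS_stable hN (by omega)]

lemma Lmap_Mon {h : NNhat} (hmono : Monotone h) (hsm : SmallMap h) : Lmap h ∈ Mon := by
  obtain ⟨N, hN⟩ := id hsm
  have hfin : ∀ i, h i ≠ ⊤ := fun i hc => by
    have := hN i
    rw [hc] at this
    exact (by simp : ¬ (⊤:ℕ∞) ≤ (N:ℕ∞)) this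
  have hb : ∀ j, PS (Lmap h) j ≤ N := by
    intro j
    have := PS_Lmap hmono hsm j
    have h2 := hN j
    rw [← this] at h2
    exact_mod_cast h2
  set u := Lmap h with hu_def
  have inj : Set.InjOn (PS u) (Function.support u) := by
    intro x hx y hy hxy
    rcases lt_trichotomy x y with hl | he | hl
    · exfalso
      obtain ⟨k, hk⟩ : ∃ k, y = k + 1 := ⟨y - 1, by omega⟩
      have h1 : PS u x ≤ PS u k := PS_mono_idx u (by omega)
      have h2 : u y ≠ 0 := hy
      rw [hk] at h2
      rw [hk, PS_succ] at hxy
      omega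
    · exact he
    · exfalso
      obtain ⟨k, hk⟩ : ∃ k, x = k + 1 := ⟨x - 1, by omega⟩
      have h1 : PS u y ≤ PS u k := PS_mono_idx u (by omega)
      have h2 : u x ≠ 0 := hx
      rw [hk] at h2
      rw [hk, PS_succ] at hxy
      omega
  have himg : (PS u '' (Function.support u)).Finite := by
    apply (Set.finite_Iic N).subset
    rintro _ ⟨j, _, rfl⟩
    exact hb j
  exact Set.Finite.of_finite_image himg inj

lemma memLambdaSet_iff {m : ℕ} {a : ℕ → ℕ} (u : ℕ → ℕ) :
    (∃ h : NNhat, Monotone h ∧ SmallMap h ∧ lexGE h (fSof m a) ∧ u = Lmap h) ↔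
      (u ∈ Mon ∧ lexGE (hOf u) (fSof m a)) := by
  constructor
  · rintro ⟨h, hmono, hsm, hlex, rfl⟩
    exact ⟨Lmap_Mon hmono hsm, by rw [hOf_Lmap hmono hsm]; exact hlex⟩
  · rintro ⟨hu, hlex⟩
    exact ⟨hOf u, hOf_mono u, hOf_small hu, hlex, (Lmap_hOf u).symm⟩

end LmapLemmas

-- ########## sequence facts and part (a)
section PartA
open Finset

variable {m : ℕ} {a : ℕ → ℕ}

lemma a_chain (hmono : ∀ i, 1 ≤ i → i < m → a i ≤ a (i + 1)) :
    ∀ i j, 1 ≤ i → i ≤ j → j ≤ m → a i ≤ a j := by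
  intro i j h1 hij hjm
  induction j, hij using Nat.le_induction with
  | base => exact le_rfl
  | succ n hn ih => exact le_trans (ih (by omega)) (hmono n (by omega) (by omega))

lemma a_ge1 (ha0 : a 0 = 1) (hpos : 1 ≤ a 1)
    (hmono : ∀ i, 1 ≤ i → i < m → a i ≤ a (i + 1)) :
    ∀ i, i ≤ m → 1 ≤ a i := by
  intro i him
  rcases Nat.eq_zero_or_pos i with rfl | hi
  · omega
  · exact le_trans hpos (a_chain hmono 1 i le_rfl hi him)

lemma fL_mono (hmono : ∀ i, 1 ≤ i → i < m → a i ≤ a (i + 1)) : Monotone (fLof m a) := by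
  intro i j hij
  unfold fLof
  by_cases hj : j < m
  · have hi : i < m := by omega
    rw [if_pos hi, if_pos hj]
    have : a (i+1) ≤ a (j+1) := a_chain hmono (i+1) (j+1) (by omega) (by omega) (by omega)
    exact_mod_cast Nat.sub_le_sub_right this 1
  · rw [if_neg hj]
    exact le_top

lemma fL_large : LargeMap (fLof m a) := ⟨m, by simp [fLof]⟩

lemma fL_top (i : ℕ) (hi : m ≤ i) : fLof m a i = ⊤ := by simp [fLof]; omega

lemma fS_mono (hmono : ∀ i, 1 ≤ i → i < m → a i ≤ a (i + 1)) : Monotone (fSof m a) := by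
  intro i j hij
  unfold fSof
  by_cases hi : i + 1 < m
  · rw [if_pos hi]
    by_cases hj : j + 1 < m
    · rw [if_pos hj]
      have : a (i+1) ≤ a (j+1) := a_chain hmono (i+1) (j+1) (by omega) (by omega) (by omega)
      exact_mod_cast Nat.sub_le_sub_right this 1
    · rw [if_neg hj]
      have : a (i+1) ≤ a m := a_chain hmono (i+1) m (by omega) (by omega) le_rfl
      exact_mod_cast by omega
  · rw [if_neg hi]
    have hj : ¬ j + 1 < m := by omega
    rw [if_neg hj]

lemma fS_small : SmallMap (fSof m a) := by
  refine ⟨a m + (∑ i ∈ Finset.range (m+1), a i), fun n => ?_⟩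
  unfold fSof
  split_ifs with h
  · have h2 : a (n+1) ≤ ∑ i ∈ Finset.range (m+1), a i :=
      Finset.single_le_sum (fun i _ => Nat.zero_le _) (Finset.mem_range.mpr (by omega))
    exact_mod_cast by omega
  · exact_mod_cast by omega

-- card-as-sum helpers
lemma cardShift (r : ℕ) (P : ℕ → Prop) [DecidablePred P] :
    Nat.card {i : ℕ // 1 ≤ i ∧ i < r + 1 ∧ P i} =
      ((Finset.range r).filter (fun i => P (i+1))).card := by
  classical
  have h1 : {i : ℕ | 1 ≤ i ∧ i < r + 1 ∧ P i} =
      ↑((Finset.range (r+1)).filter (fun i => 1 ≤ i ∧ P i)) := by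
    ext i
    simp only [Set.mem_setOf_eq, coe_filter, mem_range, Set.mem_setOf_eq]
    tauto
  calc Nat.card {i : ℕ // 1 ≤ i ∧ i < r + 1 ∧ P i}
      = ({i : ℕ | 1 ≤ i ∧ i < r + 1 ∧ P i} : Set ℕ).ncard := Nat.card_coe_set_eq _
    _ = ((Finset.range (r+1)).filter (fun i => 1 ≤ i ∧ P i)).card := by
        rw [h1, Set.ncard_coe_finset]
    _ = _ := by
        rw [Finset.card_filter, Finset.card_filter, Finset.sum_range_succ']
        simp

-- decomposition of genA
lemma genA_decomp (r : ℕ) (hr : 1 ≤ r) :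
    genA a r = (fun j => ((Finset.range (r-1)).filter (fun i => a (i+1) - 1 = j)).card)
      + xvar (a r - 2) := by
  classical
  funext j
  have h1 : Nat.card {i : ℕ // 1 ≤ i ∧ i < r ∧ a i - 1 = j} =
      ((Finset.range (r-1)).filter (fun i => a (i+1) - 1 = j)).card := by
    have hr' : r = (r - 1) + 1 := by omega
    rw [hr']
    exact cardShift (r-1) (fun i => a i - 1 = j)
  show Nat.card _ + _ = _ + xvar (a r - 2) j
  rw [h1]
  congr 1
  simp only [xvar]
  by_cases h : a r - 2 = j
  · rw [if_pos h, if_pos h.symm]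
  · rw [if_neg h, if_neg (fun hc => h hc.symm)]

-- the large map witnessing genA
def gAmap (a : ℕ → ℕ) (r : ℕ) : NNhat := fun i =>
  if i < r - 1 then ((a (i+1) - 1 : ℕ) : ℕ∞)
  else if i = r - 1 then ((a r - 2 : ℕ) : ℕ∞) else ⊤

lemma gAmap_top (r i : ℕ) (hi : r ≤ i) (hr : 1 ≤ r) : gAmap a r i = ⊤ := by
  unfold gAmap
  rw [if_neg (by omega), if_neg (by omega)]

lemma gAmap_mono (ha0 : a 0 = 1) (hpos : 1 ≤ a 1)
    (hmono : ∀ i, 1 ≤ i → i < m → a i ≤ a (i + 1))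
    (r : ℕ) (hr1 : 1 ≤ r) (hrm : r ≤ m) (hstrict : a (r-1) < a r) :
    Monotone (gAmap a r) := by
  intro i j hij
  unfold gAmap
  by_cases hi : i < r - 1
  · rw [if_pos hi]
    by_cases hj : j < r - 1
    · rw [if_pos hj]
      have : a (i+1) ≤ a (j+1) := a_chain hmono (i+1) (j+1) (by omega) (by omega) (by omega)
      exact_mod_cast Nat.sub_le_sub_right this 1
    · by_cases hj' : j = r - 1
      · rw [if_neg hj, if_pos hj']
        have h1 : a (i+1) ≤ a (r-1) := a_chain hmono (i+1) (r-1) (by omega) (by omega) (by omega)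
        exact_mod_cast by omega
      · rw [if_neg hj, if_neg hj']
        exact le_top
  · by_cases hi' : i = r - 1
    · rw [if_neg hi, if_pos hi']
      by_cases hj : j < r - 1
      · omega
      · by_cases hj' : j = r - 1
        · rw [if_neg hj, if_pos hj']
        · rw [if_neg hj, if_neg hj']
          exact le_top
    · rw [if_neg hi, if_neg hi']
      have hj : ¬ j < r - 1 := by omega
      have hj' : ¬ j = r - 1 := by omega
      rw [if_neg hj, if_neg hj']

lemma Gmap_gAmap (ha0 : a 0 = 1) (hpos : 1 ≤ a 1)
    (hmono : ∀ i, 1 ≤ i → i < m → a i ≤ a (i + 1))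
    (r : ℕ) (hr1 : 1 ≤ r) (hrm : r ≤ m) :
    Gmap (gAmap a r) = genA a r := by
  classical
  funext j
  rw [Gmap_eq_filter (fun i hi => gAmap_top r i hi hr1) j, genA_decomp r hr1]
  show _ = _ + xvar (a r - 2) j
  have hrange : Finset.range r = insert (r-1) (Finset.range (r-1)) := by
    have : r = (r - 1) + 1 := by omega
    rw [this, Finset.range_add_one]
    congr 1 <;> omega
  rw [hrange, Finset.filter_insert]
  have hval : gAmap a r (r-1) = ((a r - 2 : ℕ) : ℕ∞) := by
    unfold gAmap
    rw [if_neg (by omega), if_pos rfl]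
  have hfeq : (Finset.range (r-1)).filter (fun i => gAmap a r i = (j:ℕ∞)) =
      (Finset.range (r-1)).filter (fun i => a (i+1) - 1 = j) := by
    apply Finset.filter_congr
    intro i hi
    simp only [Finset.mem_range] at hi
    unfold gAmap
    rw [if_pos hi]
    constructor
    · intro h; exact_mod_cast h
    · intro h; exact_mod_cast h
  by_cases hcase : gAmap a r (r-1) = (j:ℕ∞)
  · rw [if_pos hcase, Finset.card_insert_of_notMem (by simp), hfeq]
    have : a r - 2 = j := by rw [hval] at hcase; exact_mod_cast hcase
    simp [xvar, this]
  · rw [if_neg hcase, hfeq]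
    have : ¬ (a r - 2 = j) := by
      intro hc
      apply hcase
      rw [hval]
      exact_mod_cast hc
    simp [xvar]
    omega

lemma gAmap_lex (ha0 : a 0 = 1) (hpos : 1 ≤ a 1)
    (hmono : ∀ i, 1 ≤ i → i < m → a i ≤ a (i + 1))
    (r : ℕ) (hr1 : 1 ≤ r) (hrm : r ≤ m) (hstrict : a (r-1) < a r) :
    lexGT (fLof m a) (gAmap a r) := by
  refine ⟨r - 1, ?_, ?_⟩
  · intro i hi
    unfold fLof gAmap
    rw [if_pos (by omega), if_pos (by omega)]
  · unfold fLof gAmap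
    rw [if_neg (show ¬ (r - 1 < r - 1) by omega), if_pos rfl,
      if_pos (show r - 1 < m by omega)]
    have har : 1 ≤ a (r-1) := a_ge1 ha0 hpos hmono (r-1) (by omega)
    have h2 : r - 1 + 1 = r := by omega
    rw [h2]
    have : a r - 2 < a r - 1 := by omega
    exact_mod_cast this

-- Gmap of fL is topMon
lemma Gmap_fL (hm : 0 < m) : Gmap (fLof m a) = topMon m a := by
  classical
  funext j
  rw [Gmap_eq_filter (fun i hi => fL_top i hi) j]
  unfold topMon
  have h1 : Nat.card {i : ℕ // 1 ≤ i ∧ i ≤ m ∧ a i - 1 = j} =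
      Nat.card {i : ℕ // 1 ≤ i ∧ i < m + 1 ∧ a i - 1 = j} := by
    apply Nat.card_congr
    apply Equiv.subtypeEquivRight
    intro i
    constructor <;> (intro h; exact ⟨h.1, by omega, h.2.2⟩)
  rw [h1, cardShift m (fun i => a i - 1 = j)]
  congr 1
  apply Finset.filter_congr
  intro i hi
  simp only [Finset.mem_range] at hi
  unfold fLof
  rw [if_pos hi]
  constructor
  · intro h; exact_mod_cast h
  · intro h; exact_mod_cast h

end PartA

-- ########## Mon preservation
lemma stStep_Mon {u v : ℕ → ℕ} (h : stStep u v) (hv : v ∈ Mon) : u ∈ Mon := by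
  rcases h with ⟨i, j, w, _, hu, hveq⟩ | ⟨i, hu⟩
  · subst hu
    have hw : w ∈ Mon := by
      apply Set.Finite.subset hv
      intro k hk
      have : v k ≠ 0 := by
        rw [hveq]
        simp only [Pi.add_apply]
        have : w k ≠ 0 := hk
        omega
      exact this
    apply Set.Finite.subset (hw.union (Set.finite_singleton i))
    intro k hk
    have hk' : w k + xvar i k ≠ 0 := hk
    rcases Nat.eq_zero_or_pos (w k) with h0 | h0
    · right
      simp only [xvar] at hk'
      by_contra hc
      simp only [Set.mem_singleton_iff] at hc
      rw [if_neg hc] at hk'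
      omega
    · exact Or.inl (by simpa [Function.mem_support] using (by omega : w k ≠ 0))
  · subst hu
    apply Set.Finite.subset (hv.union (Set.finite_singleton i))
    intro k hk
    have hk' : v k + xvar i k ≠ 0 := hk
    rcases Nat.eq_zero_or_pos (v k) with h0 | h0
    · right
      simp only [xvar] at hk'
      by_contra hc
      simp only [Set.mem_singleton_iff] at hc
      rw [if_neg hc] at hk'
      omega
    · exact Or.inl (by simpa [Function.mem_support] using (by omega : v k ≠ 0))

lemma stGE_Mon {u v : ℕ → ℕ} (h : stGE u v) : v ∈ Mon → u ∈ Mon := by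
  induction h with
  | refl => exact id
  | tail hst hstep ih => exact fun hv => ih (stStep_Mon hstep hv)

section PartAMain
open Finset

variable {m : ℕ} {a : ℕ → ℕ}

lemma genA_Mon (r : ℕ) : genA a r ∈ Mon := by
  apply Set.Finite.subset ((((Set.finite_Iio r).image (fun i => a i - 1))).union
    (Set.finite_singleton (a r - 2)))
  intro j hj
  have hj' : genA a r j ≠ 0 := hj
  unfold genA at hj'
  by_cases hcard : Nat.card {i : ℕ // 1 ≤ i ∧ i < r ∧ a i - 1 = j} = 0
  · right
    rw [hcard] at hj'
    simp only [Set.mem_singleton_iff]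
    by_contra hc
    rw [if_neg (fun hcc => hc hcc.symm)] at hj'
    omega
  · left
    have hne : Nonempty {i : ℕ // 1 ≤ i ∧ i < r ∧ a i - 1 = j} := by
      by_contra hc
      rw [not_nonempty_iff] at hc
      exact hcard (@Nat.card_of_isEmpty _ hc)
    obtain ⟨⟨i, h1, h2, h3⟩⟩ := hne
    exact ⟨i, h2, h3⟩

lemma topMon_Mon (hm : 0 < m) (hmono : ∀ i, 1 ≤ i → i < m → a i ≤ a (i + 1)) :
    topMon m a ∈ Mon := by
  rw [← Gmap_fL hm]
  exact Gmap_Mon (fL_mono hmono) fL_large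

end PartAMain

section PartAEq
open Finset

variable {m : ℕ} {a : ℕ → ℕ}

lemma partA_eq (hm : 0 < m) (ha0 : a 0 = 1) (hpos : 1 ≤ a 1)
    (hmono : ∀ i, 1 ≤ i → i < m → a i ≤ a (i + 1)) :
    {u | ∃ g : NNhat, Monotone g ∧ LargeMap g ∧ lexGE (fLof m a) g ∧ u = Gmap g} =
      sstSpan ({v | ∃ r : ℕ, 1 ≤ r ∧ r ≤ m ∧ a (r - 1) < a r ∧ v = genA a r} ∪
        {topMon m a}) := by
  classical
  ext u
  simp only [Set.mem_setOf_eq]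
  rw [memGammaSet_iff]
  constructor
  · rintro ⟨hu, hlex⟩
    have hGu : Gmap (sortOf u) = u := Gmap_sortOf
    have hglarge : LargeMap (sortOf u) := sortOf_large hu
    have hgmono : Monotone (sortOf u) := sortOf_mono u
    set g := sortOf u with hgdef
    obtain ⟨n0, hn0⟩ := id hglarge
    have hgtop : ∀ i, n0 ≤ i → g i = ⊤ := fun i hi => top_le_iff.mp (hn0 ▸ hgmono hi)
    rcases hlex with heq | ⟨r, hpre, hlt⟩
    · refine ⟨topMon m a, Or.inr rfl, ?_⟩
      have h2 : u = topMon m a := by rw [← hGu, ← heq, Gmap_fL hm]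
      rw [h2]
      exact Relation.ReflTransGen.refl
    · rcases lt_or_ge r m with hrm | hrm
      · -- r < m : generator genA a (r+1)
        have hfLr : fLof m a r = ((a (r+1) - 1 : ℕ) : ℕ∞) := by
          unfold fLof; rw [if_pos hrm]
        have hgrfin : g r ≠ ⊤ := by
          intro hc
          rw [hc, hfLr] at hlt
          exact (by simp : ¬ ((⊤:ℕ∞) < ((a (r+1) - 1 : ℕ) : ℕ∞))) hlt
        set c := (g r).toNat with hcdef
        have hgc : g r = (c:ℕ∞) := (ENat.coe_toNat hgrfin).symm
        have hclt : c < a (r+1) - 1 := by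
          rw [hgc, hfLr] at hlt
          exact_mod_cast hlt
        have hprev : ∀ i, i < r → g i = ((a (i+1) - 1 : ℕ) : ℕ∞) := by
          intro i hi
          rw [← hpre i hi]
          unfold fLof
          rw [if_pos (by omega)]
        have hstrict : a r < a (r+1) := by
          rcases Nat.eq_zero_or_pos r with rfl | hr0
          · omega
          · have h1 := hprev (r-1) (by omega)
            have h2 : g (r-1) ≤ g r := hgmono (by omega)
            rw [h1, hgc] at h2
            have h3 : a (r-1+1) - 1 ≤ c := by exact_mod_cast h2
            have h4 : r - 1 + 1 = r := by omega
            rw [h4] at h3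
            have har : 1 ≤ a r := a_ge1 ha0 hpos hmono r (by omega)
            omega
        refine ⟨genA a (r+1), Or.inl ⟨r+1, by omega, by omega, by simpa using hstrict, rfl⟩, ?_⟩
        apply stGE_of_PS_le hu (genA_Mon (r+1))
        intro j
        rw [genA_decomp (r+1) (by omega)]
        have hr1 : (r+1) - 1 = r := rfl
        rw [hr1]
        set W : ℕ → ℕ := fun j => ((Finset.range r).filter (fun i => a (i+1) - 1 = j)).card
          with hW
        have hQle : ∀ j', (W + xvar c) j' ≤ u j' := by
          intro j'
          have hstep1 : (W + xvar c) j' =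
              ((Finset.range (r+1)).filter (fun i => g i = (j':ℕ∞))).card := by
            rw [Finset.range_add_one, Finset.filter_insert]
            have hfeq : (Finset.range r).filter (fun i => g i = (j':ℕ∞)) =
                (Finset.range r).filter (fun i => a (i+1) - 1 = j') := by
              apply Finset.filter_congr
              intro i hi
              simp only [Finset.mem_range] at hi
              rw [hprev i hi]
              constructor
              · intro h; exact_mod_cast h
              · intro h; exact_mod_cast h
            by_cases hcase : g r = (j' : ℕ∞)
            · rw [if_pos hcase, Finset.card_insert_of_notMem (by simp), hfeq]
              have hcj : c = j' := by rw [hgc] at hcase; exact_mod_cast hcase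
              show W j' + xvar c j' = _
              simp [xvar, hcj, hW]
            · rw [if_neg hcase, hfeq]
              have hcj : ¬ (j' = c) := by
                intro hc2
                exact hcase (by rw [hgc, hc2])
              show W j' + xvar c j' = _
              simp [xvar, hcj, hW]
          rw [hstep1]
          have hsub : (Finset.range (r+1)).filter (fun i => g i = (j':ℕ∞)) ⊆
              (Finset.range n0).filter (fun i => g i = (j':ℕ∞)) := by
            intro i hi
            simp only [Finset.mem_filter, Finset.mem_range] at hi ⊢
            refine ⟨?_, hi.2⟩
            by_contra hc
            rw [hgtop i (by omega)] at hi
            exact (by simp : ¬ ((⊤:ℕ∞) = (j':ℕ∞))) hi.2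
          calc ((Finset.range (r+1)).filter (fun i => g i = (j':ℕ∞))).card
              ≤ ((Finset.range n0).filter (fun i => g i = (j':ℕ∞))).card :=
                Finset.card_le_card hsub
            _ = Gmap g j' := (Gmap_eq_filter hgtop j').symm
            _ = u j' := by rw [hGu]
        calc PS (W + xvar (a (r+1) - 2)) j
            = PS W j + PS (xvar (a (r+1) - 2)) j := PS_add _ _ _
          _ ≤ PS W j + PS (xvar c) j := by
              rw [PS_xvar, PS_xvar]
              have : c ≤ a (r+1) - 2 := by omega
              split_ifs <;> omega
          _ = PS (W + xvar c) j := (PS_add _ _ _).symm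
          _ ≤ PS u j := PS_le_of_le hQle j
      · -- r ≥ m : topMon
        refine ⟨topMon m a, Or.inr rfl, ?_⟩
        apply stGE_of_PS_le hu (topMon_Mon hm hmono)
        intro j
        apply PS_le_of_le
        intro j'
        have h1 : topMon m a j' = ((Finset.range m).filter
            (fun i => fLof m a i = (j':ℕ∞))).card := by
          rw [← Gmap_fL hm, Gmap_eq_filter (fun i hi => fL_top i hi) j']
        rw [h1]
        have hfeq : (Finset.range m).filter (fun i => fLof m a i = (j':ℕ∞)) =
            (Finset.range m).filter (fun i => g i = (j':ℕ∞)) := by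
          apply Finset.filter_congr
          intro i hi
          simp only [Finset.mem_range] at hi
          rw [hpre i (by omega)]
        rw [hfeq]
        have hsub : (Finset.range m).filter (fun i => g i = (j':ℕ∞)) ⊆
            (Finset.range n0).filter (fun i => g i = (j':ℕ∞)) := by
          intro i hi
          simp only [Finset.mem_filter, Finset.mem_range] at hi ⊢
          refine ⟨?_, hi.2⟩
          by_contra hc
          rw [hgtop i (by omega)] at hi
          exact (by simp : ¬ ((⊤:ℕ∞) = (j':ℕ∞))) hi.2
        calc ((Finset.range m).filter (fun i => g i = (j':ℕ∞))).card
            ≤ ((Finset.range n0).filter (fun i => g i = (j':ℕ∞))).card :=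
              Finset.card_le_card hsub
          _ = Gmap g j' := (Gmap_eq_filter hgtop j').symm
          _ = u j' := by rw [hGu]
  · rintro ⟨u0, hu0, hst⟩
    have hmem0 : u0 ∈ Mon ∧ lexGE (fLof m a) (sortOf u0) := by
      rcases hu0 with ⟨r, hr1, hrm, hstrict, rfl⟩ | rfl
      · have h1 : Gmap (gAmap a r) = genA a r := Gmap_gAmap ha0 hpos hmono r hr1 hrm
        have hmono' : Monotone (gAmap a r) := gAmap_mono ha0 hpos hmono r hr1 hrm hstrict
        have hlarge : LargeMap (gAmap a r) := ⟨r, gAmap_top r r le_rfl hr1⟩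
        refine ⟨genA_Mon r, ?_⟩
        rw [← h1, sortOf_Gmap hmono' hlarge]
        exact Or.inr (gAmap_lex ha0 hpos hmono r hr1 hrm hstrict)
      · refine ⟨topMon_Mon hm hmono, ?_⟩
        rw [← Gmap_fL hm, sortOf_Gmap (fL_mono hmono) fL_large]
        exact lexGE_refl _
    refine ⟨stGE_Mon hst hmem0.1, ?_⟩
    refine lexGE_trans hmem0.2 ?_
    exact lexGE_of_le (fun p => sortOf_le_of_PS_le (fun j => stGE_PS_le hst j) p)

end PartAEq

section PartB
variable {m : ℕ} {a : ℕ → ℕ}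

lemma genB_Mon (r : ℕ) : genB a r ∈ Mon := by
  apply Set.Finite.subset (Set.finite_Iio r)
  intro j hj
  have hj' : genB a r j ≠ 0 := hj
  unfold genB at hj'
  by_contra hc
  simp only [Set.mem_Iio, not_lt] at hc
  rw [if_neg (by omega), if_neg (by omega)] at hj'
  exact hj' rfl

lemma PS_genB (ha0 : a 0 = 1) (hpos : 1 ≤ a 1)
    (hmono : ∀ i, 1 ≤ i → i < m → a i ≤ a (i + 1))
    (r : ℕ) (hr1 : 1 ≤ r) (hrm : r ≤ m) :
    ∀ j, PS (genB a r) j = if j < r - 1 then a (j+1) - 1 else a r := by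
  have hch : ∀ i j, i ≤ j → j ≤ m → a i ≤ a j := by
    intro i j hij hjm
    rcases Nat.eq_zero_or_pos i with rfl | hi
    · rcases Nat.eq_zero_or_pos j with rfl | hj
      · exact le_rfl
      · rw [ha0]; exact le_trans hpos (a_chain hmono 1 j le_rfl hj hjm)
    · exact a_chain hmono i j hi hij hjm
  intro j
  induction j with
  | zero =>
    rw [PS_zero]
    unfold genB
    by_cases h1 : 1 < r
    · rw [if_pos h1, if_pos (by omega), ha0]
    · have hr : r = 1 := by omega
      subst hr
      rw [if_neg (by omega), if_pos rfl, if_neg (by omega), ha0]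
      omega
  | succ k ih =>
    rw [PS_succ, ih]
    unfold genB
    by_cases h1 : k + 2 < r
    · rw [if_pos (by omega), if_pos (by omega), if_pos (by omega)]
      simp only [show k + 1 + 1 = k + 2 from rfl]
      have e1 : a (k+1) ≤ a (k+2) := hch (k+1) (k+2) (by omega) (by omega)
      have e2 : 1 ≤ a (k+1) := by
        have := hch 0 (k+1) (by omega) (by omega); omega
      omega
    · by_cases h2 : k + 2 = r
      · rw [if_pos (by omega), if_neg (by omega), if_pos (by omega), if_neg (by omega)]
        have e0 : r - 1 = k + 1 := by omega
        rw [e0]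
        have e1 : a (k+1) ≤ a r := hch (k+1) r (by omega) (by omega)
        have e2 : 1 ≤ a (k+1) := by
          have := hch 0 (k+1) (by omega) (by omega); omega
        omega
      · rw [if_neg (by omega), if_neg (by omega), if_neg (by omega), if_neg (by omega)]
        omega

lemma hOf_genB_lex (hm : 0 < m) (ha0 : a 0 = 1) (hpos : 1 ≤ a 1)
    (hmono : ∀ i, 1 ≤ i → i < m → a i ≤ a (i + 1))
    (r : ℕ) (hr1 : 1 ≤ r) (hrm : r ≤ m) :
    lexGE (hOf (genB a r)) (fSof m a) := by
  have hPS := PS_genB ha0 hpos hmono r hr1 hrm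
  rcases eq_or_lt_of_le hrm with rfl | hrm'
  · left
    funext i
    show ((PS (genB a r) i : ℕ) : ℕ∞) = fSof r a i
    rw [hPS i]
    unfold fSof
    by_cases h : i < r - 1
    · rw [if_pos h, if_pos (by omega)]
    · rw [if_neg h, if_neg (by omega)]
  · right
    refine ⟨r - 1, ?_, ?_⟩
    · intro i hi
      show ((PS (genB a r) i : ℕ) : ℕ∞) = fSof m a i
      rw [hPS i]
      unfold fSof
      rw [if_pos hi, if_pos (by omega)]
    · show fSof m a (r-1) < ((PS (genB a r) (r-1) : ℕ) : ℕ∞)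
      rw [hPS (r-1)]
      unfold fSof
      rw [if_pos (show r - 1 + 1 < m by omega), if_neg (show ¬ (r - 1 < r - 1) by omega)]
      have e0 : r - 1 + 1 = r := by omega
      rw [e0]
      have har : 1 ≤ a r := a_ge1 ha0 hpos hmono r hrm
      have : a r - 1 < a r := by omega
      exact_mod_cast this

lemma partB_eq (hm : 0 < m) (ha0 : a 0 = 1) (hpos : 1 ≤ a 1)
    (hmono : ∀ i, 1 ≤ i → i < m → a i ≤ a (i + 1)) :
    {u | ∃ h : NNhat, Monotone h ∧ SmallMap h ∧ lexGE h (fSof m a) ∧ u = Lmap h} =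
      sstSpan {v | ∃ r : ℕ, 1 ≤ r ∧ r ≤ m ∧ v = genB a r} := by
  classical
  ext u
  simp only [Set.mem_setOf_eq]
  rw [memLambdaSet_iff]
  constructor
  · rintro ⟨hu, hlex⟩
    rcases hlex with heq | ⟨s, hpre, hlt⟩
    · -- u = genB a m
      have hPS := PS_genB ha0 hpos hmono m (by omega) le_rfl
      have hueq : u = genB a m := by
        apply PS_inj
        intro j
        have h1 : ((PS u j : ℕ):ℕ∞) = fSof m a j := congrFun heq j
        rw [hPS j]
        unfold fSof at h1
        by_cases h : j < m - 1
        · rw [if_pos h]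
          rw [if_pos (by omega)] at h1
          exact_mod_cast h1
        · rw [if_neg h]
          rw [if_neg (by omega)] at h1
          exact_mod_cast h1
      exact ⟨genB a m, ⟨m, by omega, le_rfl, rfl⟩, by rw [hueq]; exact Relation.ReflTransGen.refl⟩
    · by_cases hsm : s + 1 < m
      · refine ⟨genB a (s+1), ⟨s+1, by omega, by omega, rfl⟩, ?_⟩
        apply stGE_of_PS_le hu (genB_Mon (s+1))
        intro j
        rw [PS_genB ha0 hpos hmono (s+1) (by omega) (by omega) j]
        have e0 : s + 1 - 1 = s := rfl
        rw [e0]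
        by_cases hj : j < s
        · rw [if_pos hj]
          have h1 : ((PS u j : ℕ):ℕ∞) = fSof m a j := hpre j hj
          unfold fSof at h1
          rw [if_pos (by omega)] at h1
          have : PS u j = a (j+1) - 1 := by exact_mod_cast h1
          omega
        · rw [if_neg hj]
          have h2 : PS u s ≤ PS u j := PS_mono_idx u (by omega)
          have h3 : fSof m a s < ((PS u s : ℕ):ℕ∞) := hlt
          unfold fSof at h3
          rw [if_pos hsm] at h3
          have h4 : a (s+1) - 1 < PS u s := by exact_mod_cast h3
          have h5 : 1 ≤ a (s+1) := a_ge1 ha0 hpos hmono (s+1) (by omega)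
          omega
      · refine ⟨genB a m, ⟨m, by omega, le_rfl, rfl⟩, ?_⟩
        apply stGE_of_PS_le hu (genB_Mon m)
        intro j
        rw [PS_genB ha0 hpos hmono m (by omega) le_rfl j]
        by_cases hj : j < m - 1
        · rw [if_pos hj]
          have h1 : ((PS u j : ℕ):ℕ∞) = fSof m a j := hpre j (by omega)
          unfold fSof at h1
          rw [if_pos (by omega)] at h1
          have : PS u j = a (j+1) - 1 := by exact_mod_cast h1
          omega
        · rw [if_neg hj]
          by_cases hjs : j < s
          · have h1 : ((PS u j : ℕ):ℕ∞) = fSof m a j := hpre j hjs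
            unfold fSof at h1
            rw [if_neg (by omega)] at h1
            have : PS u j = a m := by exact_mod_cast h1
            omega
          · have h2 : PS u s ≤ PS u j := PS_mono_idx u (by omega)
            have h3 : fSof m a s < ((PS u s : ℕ):ℕ∞) := hlt
            unfold fSof at h3
            rw [if_neg (by omega)] at h3
            have h4 : a m < PS u s := by exact_mod_cast h3
            omega
  · rintro ⟨u0, ⟨r, hr1, hrm, rfl⟩, hst⟩
    refine ⟨stGE_Mon hst (genB_Mon r), ?_⟩
    refine lexGE_trans ?_ (hOf_genB_lex hm ha0 hpos hmono r hr1 hrm)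
    apply lexGE_of_le
    intro i
    show ((PS (genB a r) i : ℕ):ℕ∞) ≤ ((PS u i : ℕ):ℕ∞)
    exact_mod_cast stGE_PS_le hst i

end PartB

-- ########## part (c): duality
section PartC
variable {m : ℕ} {a : ℕ → ℕ}

lemma fS_ne_top (i : ℕ) : fSof m a i ≠ ⊤ := by
  unfold fSof; split_ifs <;> simp

lemma fS_lt_succ (i : ℕ) : fSof m a i < fSof m a i + 1 := by
  have h := fS_ne_top (m := m) (a := a) i
  obtain ⟨x, hx⟩ : ∃ x : ℕ, fSof m a i = (x:ℕ∞) := ⟨(fSof m a i).toNat, (ENat.coe_toNat h).symm⟩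
  rw [hx]
  have h2 : ((x:ℕ∞)) + 1 = ((x + 1 : ℕ):ℕ∞) := by push_cast; ring
  rw [h2]
  exact_mod_cast Nat.lt_succ_self x

-- the combinatorial heart: for monotone g, g ≻ fL iff g ⪰ fS
lemma lexGT_fL_iff (hm : 0 < m) (ha0 : a 0 = 1) (hpos : 1 ≤ a 1)
    (hmono : ∀ i, 1 ≤ i → i < m → a i ≤ a (i + 1))
    {g : NNhat} (hg : Monotone g) :
    lexGT g (fLof m a) ↔ lexGE g (fSof m a) := by
  have ham : 1 ≤ a m := a_ge1 ha0 hpos hmono m le_rfl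
  have hfLfS : ∀ i, i < m - 1 → fLof m a i = fSof m a i := by
    intro i hi
    unfold fLof fSof
    rw [if_pos (by omega), if_pos (by omega)]
  constructor
  · rintro ⟨r, hpre, hlt⟩
    have hrm : r < m := by
      by_contra hc
      push_neg at hc
      rw [fL_top r hc] at hlt
      exact not_top_lt hlt
    have hfLr : fLof m a r = ((a (r+1) - 1 : ℕ) : ℕ∞) := by
      unfold fLof; rw [if_pos hrm]
    rcases lt_or_ge r (m-1) with hr | hr
    · right
      refine ⟨r, fun i hi => (hpre i hi).trans (hfLfS i (by omega)), ?_⟩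
      have : fSof m a r = fLof m a r := by
        unfold fLof fSof
        rw [if_pos (by omega), if_pos (by omega)]
      rw [this]
      exact hlt
    · -- r = m - 1
      have hrm1 : r = m - 1 := by omega
      subst hrm1
      have hfLm : fLof m a (m-1) = ((a m - 1 : ℕ) : ℕ∞) := by
        unfold fLof
        rw [if_pos (by omega)]
        have e : m - 1 + 1 = m := by omega
        rw [e]
      have hgm : ((a m : ℕ) : ℕ∞) ≤ g (m-1) := by
        rw [hfLm] at hlt
        have h1 : ((a m - 1 : ℕ) : ℕ∞) + 1 ≤ g (m-1) := Order.add_one_le_of_lt hlt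
        have h2 : ((a m - 1 : ℕ) : ℕ∞) + 1 = ((a m - 1 + 1 : ℕ) : ℕ∞) := by push_cast; ring
        rw [h2] at h1
        have h3 : a m - 1 + 1 = a m := by omega
        rw [h3] at h1
        exact h1
      have hfSm : fSof m a (m-1) = ((a m : ℕ) : ℕ∞) := by
        unfold fSof
        rw [if_neg (by omega)]
      by_cases hcase : g = fSof m a
      · exact Or.inl hcase
      · right
        have hex : ∃ i, g i ≠ fSof m a i := by
          by_contra hc; push_neg at hc; exact hcase (funext hc)
        refine ⟨Nat.find hex, ?_, ?_⟩
        · intro i hi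
          have := Nat.find_min hex hi
          tauto
        · have hnt : g (Nat.find hex) ≠ fSof m a (Nat.find hex) := Nat.find_spec hex
          have htge : ¬ (Nat.find hex < m - 1) := by
            intro hc
            exact hnt (by rw [← hfLfS _ hc, ← hpre _ hc])
          push_neg at htge
          have hfSt : fSof m a (Nat.find hex) = ((a m : ℕ) : ℕ∞) := by
            have hnm : ¬ (Nat.find hex + 1 < m) := by omega
            exact if_neg hnm
          rw [hfSt]
          refine lt_of_le_of_ne ?_ (by rw [hfSt] at hnt; exact fun hc => hnt hc.symm)
          exact le_trans hgm (hg (by omega : m - 1 ≤ Nat.find hex))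
  · intro hge
    have hfLm : fLof m a (m-1) = ((a m - 1 : ℕ) : ℕ∞) := by
      unfold fLof
      rw [if_pos (by omega)]
      have e : m - 1 + 1 = m := by omega
      rw [e]
    have hfSm : fSof m a (m-1) = ((a m : ℕ) : ℕ∞) := by
      unfold fSof
      rw [if_neg (by omega)]
    rcases hge with rfl | ⟨s, hpre, hlt⟩
    · refine ⟨m-1, fun i hi => (hfLfS i hi).symm, ?_⟩
      rw [hfLm, hfSm]
      exact_mod_cast by omega
    · rcases lt_or_ge s (m-1) with hs | hs
      · refine ⟨s, fun i hi => ((hfLfS i (by omega)) ▸ (hpre i hi)), ?_⟩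
        rw [hfLfS s hs]
        exact hlt
      · refine ⟨m-1, ?_, ?_⟩
        · intro i hi
          rw [hpre i (by omega), hfLfS i hi]
        · rw [hfLm]
          have h1 : ((a m : ℕ) : ℕ∞) ≤ g (m-1) := by
            rcases eq_or_lt_of_le hs with heq | hlt2
            · rw [← hfSm, heq]
              exact le_of_lt hlt
            · rw [← hfSm, hpre (m-1) (by omega)]
          refine lt_of_lt_of_le ?_ h1
          exact_mod_cast by omega

-- basic opens / open criterion
lemma basic_isOpen {U : Set HomNN}
    (h : ∃ p q : HomNN, SmallMap p.1 ∧ LargeMap q.1 ∧ U = {f : HomNN | p ≤ f ∧ f ≤ q}) :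
    IsOpen U :=
  TopologicalSpace.isOpen_generateFrom_of_mem h

lemma open_of_nbhd {S : Set HomNN}
    (h : ∀ f ∈ S, ∃ U : Set HomNN,
      (∃ p q : HomNN, SmallMap p.1 ∧ LargeMap q.1 ∧ U = {f : HomNN | p ≤ f ∧ f ≤ q}) ∧
      f ∈ U ∧ U ⊆ S) : IsOpen S := by
  have hS : S = ⋃₀ {U : Set HomNN |
      (∃ p q : HomNN, SmallMap p.1 ∧ LargeMap q.1 ∧ U = {f : HomNN | p ≤ f ∧ f ≤ q})
      ∧ U ⊆ S} := by
    apply Set.eq_of_subset_of_subset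
    · intro f hf
      obtain ⟨U, hU1, hU2, hU3⟩ := h f hf
      exact ⟨U, ⟨hU1, hU3⟩, hU2⟩
    · rintro f ⟨U, ⟨_, hU⟩, hf⟩
      exact hU hf
  rw [hS]
  exact isOpen_sUnion (fun U hU => basic_isOpen hU.1)

def botHom : HomNN := ⟨fun _ => 0, monotone_const⟩

lemma botHom_small : SmallMap botHom.1 := ⟨0, fun n => by simp [botHom]⟩

lemma botHom_le (f : HomNN) : botHom ≤ f := fun i => by
  show (0:ℕ∞) ≤ f.1 i
  exact zero_le

def topHom : HomNN := ⟨fun _ => ⊤, monotone_const⟩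

lemma topHom_large : LargeMap topHom.1 := ⟨0, rfl⟩

lemma le_topHom (f : HomNN) : f ≤ topHom := fun i => le_top

lemma openI (hmono : ∀ i, 1 ≤ i → i < m → a i ≤ a (i + 1)) :
    IsOpen {f : HomNN | lexGE (fLof m a) f.1} := by
  apply open_of_nbhd
  intro f hf
  rcases hf with heq | ⟨r, hpre, hlt⟩
  · refine ⟨{h : HomNN | botHom ≤ h ∧ h ≤ f}, ⟨botHom, f, botHom_small, ?_, rfl⟩, ⟨botHom_le f, le_rfl⟩, ?_⟩
    · rw [← heq]; exact fL_large
    · rintro h ⟨-, hh⟩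
      have : ∀ i, h.1 i ≤ fLof m a i := by
        intro i
        rw [heq]
        exact hh i
      exact lexGE_of_le this
  · set bmap : NNhat := fun i => if i ≤ r then f.1 i else ⊤ with hbmap
    have hbmono : Monotone bmap := by
      intro i j hij
      simp only [hbmap]
      by_cases hj : j ≤ r
      · rw [if_pos (show i ≤ r by omega), if_pos hj]
        exact f.2 hij
      · rw [if_neg hj]
        exact le_top
    have hblarge : LargeMap bmap :=
      ⟨r+1, by simp only [hbmap]; rw [if_neg (show ¬ (r+1 ≤ r) by omega)]⟩
    refine ⟨{h : HomNN | botHom ≤ h ∧ h ≤ ⟨bmap, hbmono⟩},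
      ⟨botHom, ⟨bmap, hbmono⟩, botHom_small, hblarge, rfl⟩,
      ⟨botHom_le f, fun i => ?_⟩, ?_⟩
    · show f.1 i ≤ bmap i
      simp only [hbmap]
      split_ifs
      · exact le_rfl
      · exact le_top
    · rintro h ⟨-, hh⟩
      have hhle : ∀ i, h.1 i ≤ bmap i := hh
      by_cases hcase : fLof m a = h.1
      · exact Or.inl hcase
      · have hex : ∃ i, fLof m a i ≠ h.1 i := by
          by_contra hc; push_neg at hc; exact hcase (funext hc)
        refine Or.inr ⟨Nat.find hex, ?_, ?_⟩
        · intro i hi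
          have := Nat.find_min hex hi
          tauto
        · have hnt := Nat.find_spec hex
          have hhr : h.1 r ≠ fLof m a r := by
            have h1 := hhle r
            simp only [hbmap] at h1
            rw [if_pos le_rfl] at h1
            exact fun hc => absurd (hc ▸ h1) (not_le.mpr hlt)
          have htr : Nat.find hex ≤ r := Nat.find_min' hex (fun hc => hhr hc.symm)
          have h1 := hhle (Nat.find hex)
          simp only [hbmap] at h1
          rw [if_pos htr] at h1
          rcases eq_or_lt_of_le htr with heq2 | hlt2
          · rw [heq2] at h1 hnt ⊢
            exact lt_of_le_of_ne (le_trans h1 (le_of_lt hlt)) (fun hc => hnt hc.symm)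
          · rw [← hpre _ hlt2] at h1
            exact lt_of_le_of_ne h1 (fun hc => hnt hc.symm)

lemma openC (hm : 0 < m) (hmono : ∀ i, 1 ≤ i → i < m → a i ≤ a (i + 1)) :
    IsOpen {f : HomNN | lexGE f.1 (fSof m a)} := by
  apply open_of_nbhd
  intro f hf
  have hfSHom : Monotone (fSof m a) := fS_mono hmono
  rcases hf with heq | ⟨r, hpre, hlt⟩
  · refine ⟨{h : HomNN | (⟨fSof m a, hfSHom⟩ : HomNN) ≤ h ∧ h ≤ topHom},
      ⟨⟨fSof m a, hfSHom⟩, topHom, fS_small, topHom_large, rfl⟩,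
      ⟨fun i => by show fSof m a i ≤ f.1 i; rw [heq], le_topHom f⟩, ?_⟩
    rintro h ⟨hh, -⟩
    exact lexGE_of_le hh
  · set amap : NNhat := fun i => if i < r then fSof m a i else fSof m a r + 1 with hamap
    have hamono : Monotone amap := by
      intro i j hij
      simp only [hamap]
      by_cases hi : i < r
      · rw [if_pos hi]
        by_cases hj : j < r
        · rw [if_pos hj]; exact hfSHom hij
        · rw [if_neg hj]
          exact le_trans (hfSHom (by omega : i ≤ r)) (le_add_right le_rfl)
      · rw [if_neg hi, if_neg (show ¬ j < r by omega)]
    have hasmall : SmallMap amap := by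
      obtain ⟨N, hN⟩ := fS_small (m := m) (a := a)
      refine ⟨N + 1, fun n => ?_⟩
      simp only [hamap]
      have hcast : ((N + 1 : ℕ) : ℕ∞) = (N : ℕ∞) + 1 := by push_cast; ring
      split_ifs
      · exact le_trans (hN _) (by rw [hcast]; exact le_add_right le_rfl)
      · rw [hcast]
        exact add_le_add_left (hN r) 1
    have hale : ∀ i, amap i ≤ f.1 i := by
      intro i
      simp only [hamap]
      split_ifs with hi
      · rw [← hpre i hi]
      · refine le_trans ?_ (f.2 (by omega : r ≤ i))
        exact Order.add_one_le_of_lt hlt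
    refine ⟨{h : HomNN | (⟨amap, hamono⟩ : HomNN) ≤ h ∧ h ≤ topHom},
      ⟨⟨amap, hamono⟩, topHom, hasmall, topHom_large, rfl⟩,
      ⟨fun i => hale i, le_topHom f⟩, ?_⟩
    rintro h ⟨hh, -⟩
    have hhge : ∀ i, amap i ≤ h.1 i := hh
    by_cases hcase : h.1 = fSof m a
    · exfalso
      have h1 := hhge r
      simp only [hamap] at h1
      rw [if_neg (show ¬ r < r by omega), hcase] at h1
      exact absurd (lt_of_lt_of_le (fS_lt_succ r) h1) (lt_irrefl _)
    · have hex : ∃ i, h.1 i ≠ fSof m a i := by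
        by_contra hc; push_neg at hc; exact hcase (funext hc)
      refine Or.inr ⟨Nat.find hex, ?_, ?_⟩
      · intro i hi
        have := Nat.find_min hex hi
        tauto
      · have hnt := Nat.find_spec hex
        have hhr : h.1 r ≠ fSof m a r := by
          have h1 := hhge r
          simp only [hamap] at h1
          rw [if_neg (show ¬ r < r by omega)] at h1
          intro hc
          rw [hc] at h1
          exact absurd (lt_of_lt_of_le (fS_lt_succ r) h1) (lt_irrefl _)
        have htr : Nat.find hex ≤ r := Nat.find_min' hex hhr
        have h1 := hhge (Nat.find hex)
        rcases eq_or_lt_of_le htr with heq2 | hlt2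
        · simp only [hamap] at h1
          rw [heq2] at h1 hnt ⊢
          rw [if_neg (show ¬ r < r by omega)] at h1
          exact lt_of_lt_of_le (fS_lt_succ r) h1
        · simp only [hamap] at h1
          rw [if_pos hlt2] at h1
          exact lt_of_le_of_ne h1 (fun hc => hnt hc.symm)

lemma complI_eq (hm : 0 < m) (ha0 : a 0 = 1) (hpos : 1 ≤ a 1)
    (hmono : ∀ i, 1 ≤ i → i < m → a i ≤ a (i + 1)) :
    {f : HomNN | lexGE (fLof m a) f.1}ᶜ = {f : HomNN | lexGE f.1 (fSof m a)} := by
  ext f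
  simp only [Set.mem_compl_iff, Set.mem_setOf_eq]
  constructor
  · intro hn
    have hne : fLof m a ≠ f.1 := fun hc => hn (Or.inl hc)
    rcases lexGT_total hne with hgt | hgt
    · exact absurd (Or.inr hgt) hn
    · exact (lexGT_fL_iff hm ha0 hpos hmono f.2).mp hgt
  · intro hge hc
    exact lexGE_not_lexGT hc ((lexGT_fL_iff hm ha0 hpos hmono f.2).mpr hge)

lemma lowerI : IsLowerSet {f : HomNN | lexGE (fLof m a) f.1} := by
  intro g f hle hg
  refine lexGE_trans hg (lexGE_of_le ?_)
  exact fun i => hle i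

lemma partC (hm : 0 < m) (ha0 : a 0 = 1) (hpos : 1 ≤ a 1)
    (hmono : ∀ i, 1 ≤ i → i < m → a i ≤ a (i + 1)) :
    IsDualPair
      {u | ∃ g : NNhat, Monotone g ∧ LargeMap g ∧ lexGE (fLof m a) g ∧ u = Gmap g}
      {u | ∃ h : NNhat, Monotone h ∧ SmallMap h ∧ lexGE h (fSof m a) ∧ u = Lmap h} := by
  refine ⟨{f : HomNN | lexGE (fLof m a) f.1}, openI hmono, lowerI, ?_, ?_, ?_⟩
  · have hclosed : IsClosed {f : HomNN | lexGE (fLof m a) f.1} := by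
      rw [← isOpen_compl_iff, complI_eq hm ha0 hpos hmono]
      exact openC hm hmono
    rw [hclosed.closure_eq, (openI hmono).interior_eq]
  · ext u
    simp only [GammaIdeal, Set.mem_setOf_eq]
    constructor
    · rintro ⟨f, hmem, hl, he⟩
      exact ⟨f.1, f.2, hl, hmem, he⟩
    · rintro ⟨g, hg, hl, hmem, he⟩
      exact ⟨⟨g, hg⟩, hmem, hl, he⟩
  · rw [complI_eq hm ha0 hpos hmono, (openC hm hmono).interior_eq]
    ext u
    simp only [LambdaIdeal, Set.mem_setOf_eq]
    constructor
    · rintro ⟨f, hmem, hs, he⟩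
      exact ⟨f.1, f.2, hs, hmem, he⟩
    · rintro ⟨h, hh, hs, hmem, he⟩
      exact ⟨⟨h, hh⟩, hmem, hs, he⟩

end PartC
/-- for the finite weakly increasing sequence `a_1 ≤ … ≤ a_m` of
positive integers (with the convention `a_0 = 1`):
(a) `{Γg : g large, g ⪯_lex f^L}` is strongly stably generated by the monomials
`x_{a_1}⋯x_{a_{r-1}}·x_{a_r - 1}` for `1 ≤ r ≤ m` with `a_{r-1} < a_r`, together
with `x_{a_1}⋯x_{a_m}`;
(b) `{Λh : h small, h ⪰_lex f_S}` is strongly stably generated by the monomials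
`x_1^{a_1-a_0}⋯x_{r-1}^{a_{r-1}-a_{r-2}} x_r^{a_r-a_{r-1}+1}` for `1 ≤ r ≤ m`;
and these two ideals are dual finitely generated (universal lex-segment)
strongly stable ideals. -/
theorem stmt17 (m : ℕ) (hm : 0 < m) (a : ℕ → ℕ) (ha0 : a 0 = 1)
    (hpos : 1 ≤ a 1) (hmono : ∀ i, 1 ≤ i → i < m → a i ≤ a (i + 1)) :
    ({u | ∃ g : NNhat, Monotone g ∧ LargeMap g ∧ lexGE (fLof m a) g ∧ u = Gmap g} =
      sstSpan ({v | ∃ r : ℕ, 1 ≤ r ∧ r ≤ m ∧ a (r - 1) < a r ∧ v = genA a r} ∪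
        {topMon m a})) ∧
    ({u | ∃ h : NNhat, Monotone h ∧ SmallMap h ∧ lexGE h (fSof m a) ∧ u = Lmap h} =
      sstSpan {v | ∃ r : ℕ, 1 ≤ r ∧ r ≤ m ∧ v = genB a r}) ∧
    IsDualPair
      {u | ∃ g : NNhat, Monotone g ∧ LargeMap g ∧ lexGE (fLof m a) g ∧ u = Gmap g}
      {u | ∃ h : NNhat, Monotone h ∧ SmallMap h ∧ lexGE h (fSof m a) ∧ u = Lmap h} := by
  exact ⟨partA_eq hm ha0 hpos hmono, partB_eq hm ha0 hpos hmono,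
    partC hm ha0 hpos hmono⟩

end
end
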